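/- arXiv:2410.07756 — 6 statements merged into one kernel-verified Lean document; each statement's English description precedes it below -/
import Mathlib

section
/- Foster's theorem: Let G = (V, E) be a finite simple connected loopless graph. For every choice of edge weights c with 0 < c_e < ∞ for all e ∈ E, the relative resistances satisfy ∑_{e ∈ E} r_e(c) = |V| − 1. -/
open scoped Classical

namespace RCurv

variable {V : Type*} [Fintype V] [DecidableEq V]

/-- `T` is (the edge set of) a spanning tree of `G`. -/
def IsSpanningTree (G : SimpleGraph V) (T : Finset (Sym2 V)) : Prop :=
  (T : Set (Sym2 V)) ⊆ G.edgeSet ∧ (SimpleGraph.fromEdgeSet (T : Set (Sym2 V))).IsTree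

/-- The finite set of all spanning trees of `G`. -/
noncomputable def spanningTrees (G : SimpleGraph V) : Finset (Finset (Sym2 V)) :=
  Finset.univ.filter fun T => IsSpanningTree G T

/-- The relative resistance `r_e(c)` of an edge `e`. -/
noncomputable def relRes (G : SimpleGraph V) (c : Sym2 V → ℝ) (e : Sym2 V) : ℝ :=
  (∑ T ∈ (spanningTrees G).filter (fun T => e ∈ T), ∏ t ∈ T, c t) /
    (∑ T ∈ spanningTrees G, ∏ t ∈ T, c t)

/-- The resistance curvature `p_v(c)` of a vertex `v`. -/
noncomputable def curv (G : SimpleGraph V) (c : Sym2 V → ℝ) (v : V) : ℝ :=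
  1 - (1 / 2) * ∑ u ∈ G.neighborFinset v, relRes G c s(u, v)

/-- `G` is resistance nonnegative. -/
def IsRN (G : SimpleGraph V) : Prop :=
  ∃ c : Sym2 V → ℝ, (∀ e ∈ G.edgeSet, 0 < c e) ∧ ∀ v : V, 0 ≤ curv G c v

/-- `G` is resistance positive. -/
def IsRP (G : SimpleGraph V) : Prop :=
  ∃ c : Sym2 V → ℝ, (∀ e ∈ G.edgeSet, 0 < c e) ∧ ∀ v : V, 0 < curv G c v

/-- The indicator vector of a finite edge set, as a vector in `ℝ^{Sym2 V}`. -/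
noncomputable def indVec (T : Finset (Sym2 V)) : Sym2 V → ℝ := fun e => if e ∈ T then 1 else 0

/-- The spanning tree polytope `P(G)`. -/
noncomputable def stPolytope (G : SimpleGraph V) : Set (Sym2 V → ℝ) :=
  convexHull ℝ {x | ∃ T ∈ spanningTrees G, x = indVec T}

/-- `M` is a matching of `G`. -/
def IsMatching' (G : SimpleGraph V) (M : Finset (Sym2 V)) : Prop :=
  (M : Set (Sym2 V)) ⊆ G.edgeSet ∧ ∀ v : V, (M.filter fun e => v ∈ e).card ≤ 1

/-- The matching polytope `M(G)`. -/
noncomputable def matchingPolytope (G : SimpleGraph V) : Set (Sym2 V → ℝ) :=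
  convexHull ℝ {x | ∃ M : Finset (Sym2 V), IsMatching' G M ∧ x = indVec M}

/-- A Hamiltonian path: a spanning tree in which every vertex has degree at most `2`. -/
def IsHamPath (G : SimpleGraph V) (H : Finset (Sym2 V)) : Prop :=
  IsSpanningTree G H ∧ ∀ v : V, (H.filter fun e => v ∈ e).card ≤ 2

end RCurv

open SimpleGraph in
private lemma reachable_del_of_not_bridge {V : Type*} (G : SimpleGraph V) {v w : V}
    (hr : (G \ SimpleGraph.fromEdgeSet {s(v, w)}).Reachable v w) :
    ∀ {a b : V}, G.Reachable a b →
      (G \ SimpleGraph.fromEdgeSet {s(v, w)}).Reachable a b := by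
  intro a b ⟨p⟩
  induction p with
  | nil => exact Reachable.refl _
  | @cons u x y h p ih =>
    refine Reachable.trans ?_ ih
    by_cases he : s(u, x) = s(v, w)
    · rcases Sym2.eq_iff.mp he with ⟨rfl, rfl⟩ | ⟨rfl, rfl⟩
      · exact hr
      · exact hr.symm
    · exact Adj.reachable (by simp [sdiff_adj, fromEdgeSet_adj, he, h])

open SimpleGraph in
private lemma exists_spanning_tree_aux {V : Type*} [Fintype V] :
    ∀ (n : ℕ) (H : SimpleGraph V), H.edgeSet.ncard = n → H.Connected →
      ∃ T : SimpleGraph V, T ≤ H ∧ T.IsTree := by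
  intro n
  induction n using Nat.strong_induction_on with
  | _ n ih =>
    intro H hcard hconn
    by_cases hac : H.IsAcyclic
    · exact ⟨H, le_refl H, ⟨hconn, hac⟩⟩
    · rw [isAcyclic_iff_forall_edge_isBridge] at hac
      push_neg at hac
      obtain ⟨e, he, hbr⟩ := hac
      induction e using Sym2.ind with
      | _ v w =>
        have hadj : H.Adj v w := he
        have hr : (H \ SimpleGraph.fromEdgeSet {s(v, w)}).Reachable v w := by
          by_contra hnr
          exact hbr (isBridge_iff.mpr hnr)
        set H' := H \ SimpleGraph.fromEdgeSet {s(v, w)} with hH'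
        have hconn' : H'.Connected := by
          have : Nonempty V := hconn.nonempty
          exact ⟨fun a b => reachable_del_of_not_bridge H hr (hconn a b)⟩
        have hE' : H'.edgeSet = H.edgeSet \ {s(v, w)} := by
          simp [hH', edgeSet_sdiff, edgeSet_fromEdgeSet, edgeSet_sdiff_sdiff_isDiag]
        have hlt : H'.edgeSet.ncard < n := by
          rw [hE', ← hcard]
          exact Set.ncard_diff_singleton_lt_of_mem he (Set.toFinite _)
        obtain ⟨T, hTH', hT⟩ := ih _ hlt H' rfl hconn'
        exact ⟨T, le_trans hTH' sdiff_le, hT⟩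

open RCurv SimpleGraph in
private lemma mem_spanningTrees_iff {V : Type*} [Fintype V] [DecidableEq V] (G : SimpleGraph V)
    (T : Finset (Sym2 V)) : T ∈ spanningTrees G ↔ IsSpanningTree G T := by
  simp [spanningTrees]

open RCurv SimpleGraph in
private lemma spanningTrees_nonempty {V : Type*} [Fintype V] [DecidableEq V] (G : SimpleGraph V)
    (hG : G.Connected) : (spanningTrees G).Nonempty := by
  obtain ⟨T, hTG, hT⟩ := exists_spanning_tree_aux _ G rfl hG
  refine ⟨T.edgeSet.toFinset, (mem_spanningTrees_iff G _).mpr ⟨?_, ?_⟩⟩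
  · rw [Set.coe_toFinset]; exact edgeSet_mono hTG
  · rw [Set.coe_toFinset, fromEdgeSet_edgeSet]; exact hT

open RCurv SimpleGraph in
private lemma card_of_mem_spanningTrees {V : Type*} [Fintype V] [DecidableEq V]
    {G : SimpleGraph V} {T : Finset (Sym2 V)} (hT : T ∈ spanningTrees G) :
    T.card = Fintype.card V - 1 := by
  rw [mem_spanningTrees_iff] at hT
  obtain ⟨hsub, htree⟩ := hT
  have hE : (SimpleGraph.fromEdgeSet (T : Set (Sym2 V))).edgeSet = (T : Set (Sym2 V)) := by
    rw [edgeSet_fromEdgeSet]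
    ext e
    simp only [Set.mem_diff, Set.mem_setOf_eq, and_iff_left_iff_imp]
    intro heT
    exact G.not_isDiag_of_mem_edgeSet (hsub heT)
  have h2 : (SimpleGraph.fromEdgeSet (T : Set (Sym2 V))).edgeFinset = T := by
    ext e
    simp [mem_edgeFinset, hE]
  have h3 := htree.card_edgeFinset
  rw [h2] at h3
  omega

open RCurv in
/-- **Foster's theorem**: for any positive edge weights `c`, the relative resistances of the
edges of a finite simple connected graph sum to `|V| - 1`. -/
theorem foster_theorem {V : Type*} [Fintype V] [DecidableEq V]
    (G : SimpleGraph V) (hG : G.Connected)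
    (c : Sym2 V → ℝ) (hc : ∀ e ∈ G.edgeSet, 0 < c e) :
    ∑ e ∈ G.edgeFinset, relRes G c e = (Fintype.card V : ℝ) - 1 := by
  have hne : (spanningTrees G).Nonempty := spanningTrees_nonempty G hG
  have hposT : ∀ T ∈ spanningTrees G, 0 < ∏ t ∈ T, c t := by
    intro T hT
    rw [mem_spanningTrees_iff] at hT
    exact Finset.prod_pos fun t ht => hc t (hT.1 ht)
  have hZ : 0 < ∑ T ∈ spanningTrees G, ∏ t ∈ T, c t := Finset.sum_pos hposT hne
  have hsub : ∀ T ∈ spanningTrees G, T ⊆ G.edgeFinset := by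
    intro T hT e he
    rw [mem_spanningTrees_iff] at hT
    exact SimpleGraph.mem_edgeFinset.mpr (hT.1 he)
  have : Nonempty V := hG.nonempty
  have hn : 1 ≤ Fintype.card V := Fintype.card_pos
  unfold relRes
  rw [← Finset.sum_div]
  have key : ∑ e ∈ G.edgeFinset, ∑ T ∈ (spanningTrees G).filter (fun T => e ∈ T), ∏ t ∈ T, c t
      = ((Fintype.card V : ℝ) - 1) * ∑ T ∈ spanningTrees G, ∏ t ∈ T, c t := by
    simp_rw [Finset.sum_filter]
    rw [Finset.sum_comm, Finset.mul_sum]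
    refine Finset.sum_congr rfl fun T hT => ?_
    rw [← Finset.sum_filter]
    have hfil : G.edgeFinset.filter (fun e => e ∈ T) = T := by
      ext e
      simp only [Finset.mem_filter]
      exact ⟨fun h => h.2, fun h => ⟨hsub T hT h, h⟩⟩
    rw [hfil, Finset.sum_const, card_of_mem_spanningTrees hT, nsmul_eq_mul,
      Nat.cast_sub hn, Nat.cast_one]
  rw [key, mul_div_assoc, div_self hZ.ne', mul_one]
end

section
/- Local Foster's theorem: Let G = (V, E) be a finite simple connected loopless graph and let U ⊆ V and E(U) ⊆ E be the vertex set and edge set of a biconnected component (block) of G. Then for every choice of edge weights c with 0 < c_e < ∞ for all e ∈ E, the relative resistances satisfy ∑_{e ∈ E(U)} r_e(c) = |U| − 1. -/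
open scoped Classical

namespace RCurv

variable {V : Type*} [Fintype V] [DecidableEq V]

/-- `U` is the vertex set of a biconnected component (block) of `G`:
a maximal vertex set inducing a connected subgraph without cut vertices. -/
def IsBlockVertexSet (G : SimpleGraph V) (U : Finset V) : Prop :=
  ((G.induce (U : Set V)).Connected ∧
      ∀ x ∈ U, ((U : Set V) \ {x}).Nonempty → (G.induce ((U : Set V) \ {x})).Connected) ∧
    ∀ W : Finset V, U ⊆ W →
      ((G.induce (W : Set V)).Connected ∧
        ∀ x ∈ W, ((W : Set V) \ {x}).Nonempty → (G.induce ((W : Set V) \ {x})).Connected) →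
      W = U

/-- The edges of the induced subgraph on a vertex set `U`. -/
noncomputable def inducedEdges (G : SimpleGraph V) (U : Finset V) : Finset (Sym2 V) :=
  G.edgeFinset.filter fun e => ∀ v ∈ e, v ∈ U

end RCurv



namespace RCurv

open SimpleGraph

variable {V : Type*} [Fintype V] [DecidableEq V] {G : SimpleGraph V}

/-- Walk with support in S gives reachability in induced graph. -/
lemma reachable_induce_of_walk {S : Set V} : ∀ {a b : V} (p : G.Walk a b)
    (hs : ∀ v ∈ p.support, v ∈ S),
    (G.induce S).Reachable ⟨a, hs a p.start_mem_support⟩ ⟨b, hs b p.end_mem_support⟩ := by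
  intro a b p
  induction p with
  | nil => intro hs; rfl
  | cons h q ih =>
    intro hs
    have hmem : ∀ v ∈ q.support, v ∈ S := fun v hv => hs v (by
      rw [Walk.support_cons]; exact List.mem_cons_of_mem _ hv)
    have h1 : (G.induce S).Adj ⟨_, hs _ (Walk.start_mem_support _)⟩
        ⟨_, hmem _ q.start_mem_support⟩ := h
    exact (Adj.reachable h1).trans (ih hmem)

lemma reachable_induce_mono {S S' : Set V} (hSS : S ⊆ S') {a b : S}
    (h : (G.induce S).Reachable a b) :
    (G.induce S').Reachable ⟨a, hSS a.2⟩ ⟨b, hSS b.2⟩ := by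
  exact h.map (⟨fun x => ⟨x.1, hSS x.2⟩, fun {x y} hxy => hxy⟩ : G.induce S →g G.induce S')

/-- In a path, the last vertex does not appear in `takeUntil` at an earlier vertex. -/
lemma last_not_mem_takeUntil {a b v : V} {p : G.Walk a b} (hp : p.IsPath)
    (hv : v ∈ p.support) (hne : v ≠ b) : b ∉ (p.takeUntil v hv).support := by
  intro hb
  have hspec := p.take_spec hv
  have hnd : p.support.Nodup := hp.support_nodup
  rw [← hspec, Walk.support_append] at hnd
  have hb2 : b ∈ (p.dropUntil v hv).support.tail := by
    have := (p.dropUntil v hv).end_mem_support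
    rcases List.mem_cons.mp (by rwa [Walk.support_eq_cons (p.dropUntil v hv)] at this) with h | h
    · exact absurd h.symm hne
    · exact h
  exact (List.disjoint_of_nodup_append hnd) hb hb2

/-- In a path, the first vertex does not appear in `dropUntil` at a later vertex. -/
lemma head_not_mem_dropUntil {a b v : V} {p : G.Walk a b} (hp : p.IsPath)
    (hv : v ∈ p.support) (hne : v ≠ a) : a ∉ (p.dropUntil v hv).support := by
  intro ha
  have hspec := p.take_spec hv
  have hnd : p.support.Nodup := hp.support_nodup
  rw [← hspec, Walk.support_append] at hnd
  have ha2 : a ∈ (p.dropUntil v hv).support.tail := by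
    rcases List.mem_cons.mp (by rwa [Walk.support_eq_cons (p.dropUntil v hv)] at ha) with h | h
    · exact absurd h (Ne.symm hne)
    · exact h
  exact (List.disjoint_of_nodup_append hnd)
    ((p.takeUntil v hv).start_mem_support) ha2

/-- Decompose a walk ending in `U` at the first vertex of `U`. -/
lemma exists_first_mem {U : Finset V} : ∀ {z y : V} (q : G.Walk z y), y ∈ U →
    ∃ w, w ∈ U ∧ ∃ (r : G.Walk z w) (r' : G.Walk w y), r.append r' = q ∧
      (∀ v ∈ r.support, v ≠ w → v ∉ U) ∧ r'.length ≤ q.length := by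
  intro z y q
  induction q with
  | nil =>
    intro hy
    exact ⟨_, hy, Walk.nil, Walk.nil, rfl, by simp, le_rfl⟩
  | @cons a b c h q ih =>
    intro hy
    by_cases ha : a ∈ U
    · exact ⟨a, ha, Walk.nil, Walk.cons h q, rfl, by simp, le_rfl⟩
    · obtain ⟨w, hw, r, r', hspec, hsupp, hlen⟩ := ih hy
      refine ⟨w, hw, Walk.cons h r, r', by rw [Walk.cons_append, hspec], ?_, ?_⟩
      · intro v hv hvw
        rw [Walk.support_cons] at hv
        rcases List.mem_cons.mp hv with rfl | hv
        · exact ha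
        · exact hsupp v hv hvw
      · simp only [Walk.length_cons]; omega

/-- Deleting a non-bridge edge of a connected graph keeps it connected. -/
lemma connected_sdiff_of_not_isBridge {v w : V} (hG : G.Connected) (h : G.Adj v w)
    (hr : (G \ fromEdgeSet {s(v, w)}).Reachable v w) :
    (G \ fromEdgeSet {s(v, w)}).Connected := by
  rw [connected_iff]
  refine ⟨fun a b => ?_, hG.nonempty⟩
  obtain ⟨p⟩ := hG.preconnected a b
  clear hG
  induction p with
  | nil => rfl
  | @cons a x b hax q ih =>
    refine Reachable.trans ?_ ih
    by_cases he : s(a, x) = s(v, w)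
    · rcases Sym2.eq_iff.mp he with ⟨rfl, rfl⟩ | ⟨rfl, rfl⟩
      · exact hr
      · exact hr.symm
    · refine Adj.reachable ?_
      simp only [sdiff_adj, fromEdgeSet_adj]
      exact ⟨hax, fun hc => he hc.1⟩

/-- Every finite connected graph has a spanning tree (as an edge finset). -/
lemma exists_spanning_tree (G : SimpleGraph V) (hG : G.Connected) :
    ∃ T : Finset (Sym2 V), (T : Set (Sym2 V)) ⊆ G.edgeSet ∧
      (SimpleGraph.fromEdgeSet (T : Set (Sym2 V))).IsTree := by
  classical
  obtain ⟨n, hn⟩ : ∃ n, G.edgeFinset.card = n := ⟨_, rfl⟩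
  induction n using Nat.strong_induction_on generalizing G with
  | _ n ih =>
    by_cases hac : G.IsAcyclic
    · refine ⟨G.edgeFinset, by simp [Set.coe_toFinset], ?_⟩
      rw [coe_edgeFinset, fromEdgeSet_edgeSet]
      exact ⟨hG, hac⟩
    · rw [isAcyclic_iff_forall_adj_isBridge] at hac
      push_neg at hac
      obtain ⟨v, w, hvw, hbr⟩ := hac
      rw [isBridge_iff] at hbr
      push_neg at hbr
      have hr : (G \ fromEdgeSet {s(v, w)}).Reachable v w := hbr
      have hconn := connected_sdiff_of_not_isBridge hG hvw hr
      set G' := G \ fromEdgeSet {s(v, w)} with hG'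
      have hlt : G'.edgeFinset.card < n := by
        rw [← hn]
        apply Finset.card_lt_card
        rw [Finset.ssubset_iff_of_subset]
        · exact ⟨s(v, w), by simpa using hvw, by
            simp [hG', edgeSet_sdiff, edgeSet_fromEdgeSet, Set.mem_diff, hvw]⟩
        · intro e he
          rw [mem_edgeFinset] at he ⊢
          rw [hG', edgeSet_sdiff] at he
          exact he.1
      obtain ⟨T, hT1, hT2⟩ := ih _ hlt G' hconn (by congr!)
      refine ⟨T, ?_, hT2⟩
      refine hT1.trans ?_
      rw [hG', edgeSet_sdiff]
      exact Set.diff_subset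

lemma ear_absurd (G : SimpleGraph V) (U : Finset V)
    (hU : IsBlockVertexSet G U) {x y : V} (hx : x ∈ U) (hy : y ∈ U) (hxy : x ≠ y)
    (p : G.Walk x y) (hp : p.IsPath)
    (hint : ∀ v ∈ p.support, v ≠ x → v ≠ y → v ∉ U)
    (hz : ∃ v ∈ p.support, v ≠ x ∧ v ≠ y) : False := by
  obtain ⟨z0, hz0s, hz0x, hz0y⟩ := hz
  have hz0U : z0 ∉ U := hint _ hz0s hz0x hz0y
  set W : Finset V := U ∪ (p.support.toFinset \ {x, y}) with hW
  have hUW : U ⊆ W := Finset.subset_union_left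
  have hUWs : (U : Set V) ⊆ (W : Set V) := by exact_mod_cast hUW
  have hsuppW : ∀ v ∈ p.support, v ∈ W := by
    intro v hv
    by_cases hvx : v = x
    · exact hUW (hvx ▸ hx)
    by_cases hvy : v = y
    · exact hUW (hvy ▸ hy)
    · simp [hW, hvx, hvy, List.mem_toFinset.mpr hv]
  have hWU : ∀ v ∈ W, v ∉ U → v ∈ p.support ∧ v ≠ x ∧ v ≠ y := by
    intro v hv hvU
    simp only [hW, Finset.mem_union, Finset.mem_sdiff, List.mem_toFinset,
      Finset.mem_insert, Finset.mem_singleton] at hv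
    rcases hv with hv | ⟨hv, hv2⟩
    · exact absurd hv hvU
    · push_neg at hv2; exact ⟨hv, hv2⟩
  -- connectivity of induce W
  have h1 : (G.induce (W : Set V)).Connected := by
    have hxW : x ∈ (W : Set V) := hUWs hx
    have key : ∀ b : (W : Set V), (G.induce (W : Set V)).Reachable ⟨x, hxW⟩ b := by
      rintro ⟨b, hb⟩
      by_cases hbU : b ∈ U
      · have := (hU.1.1).preconnected ⟨x, hx⟩ ⟨b, hbU⟩
        exact reachable_induce_mono hUWs this
      · obtain ⟨hbs, _, _⟩ := hWU b (by exact_mod_cast hb) hbU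
        have hsub : ∀ v ∈ (p.takeUntil b hbs).support, v ∈ (W : Set V) := fun v hv =>
          hsuppW v (Walk.support_takeUntil_subset _ _ hv)
        exact reachable_induce_of_walk (p.takeUntil b hbs) hsub
    exact (connected_iff _).mpr ⟨fun u v => (key u).symm.trans (key v), ⟨⟨x, hxW⟩⟩⟩
  -- connectivity of induce (W \ {w})
  have h2 : ∀ w ∈ W, ((W : Set V) \ {w}).Nonempty →
      (G.induce ((W : Set V) \ {w})).Connected := by
    intro w hwW _
    set S : Set V := (W : Set V) \ {w} with hS
    have hmemS : ∀ v, v ∈ W → v ≠ w → v ∈ S := fun v h1 h2 => ⟨by exact_mod_cast h1, h2⟩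
    by_cases hwU : w ∈ U
    · by_cases hwx : w = x
      · subst hwx
        -- anchor y
        have hyS : y ∈ S := hmemS y (hUW hy) (Ne.symm hxy)
        have hUsub : ((U : Set V) \ {w}) ⊆ S := fun v ⟨h1, h2⟩ => ⟨hUWs h1, h2⟩
        have hUc := hU.1.2 w hwU ⟨y, hy, Ne.symm hxy⟩
        have key : ∀ b : S, (G.induce S).Reachable ⟨y, hyS⟩ b := by
          rintro ⟨b, hbW, hbw⟩
          simp only [Set.mem_singleton_iff] at hbw
          by_cases hbU : b ∈ U
          · have := hUc.preconnected ⟨y, hy, Ne.symm hxy⟩ ⟨b, hbU, hbw⟩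
            exact reachable_induce_mono hUsub this
          · obtain ⟨hbs, hbx, hby⟩ := hWU b (by exact_mod_cast hbW) hbU
            have hwr : w ∉ (p.dropUntil b hbs).support :=
              head_not_mem_dropUntil hp hbs hbx
            have hsub : ∀ v ∈ (p.dropUntil b hbs).support, v ∈ S := fun v hv =>
              hmemS v (hsuppW v (Walk.support_dropUntil_subset _ _ hv))
                (fun hc => hwr (hc ▸ hv))
            exact (reachable_induce_of_walk (p.dropUntil b hbs) hsub).symm
        exact (connected_iff _).mpr ⟨fun u v => (key u).symm.trans (key v), ⟨⟨y, hyS⟩⟩⟩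
      · by_cases hwy : w = y
        · subst hwy
          -- anchor x
          have hxS : x ∈ S := hmemS x (hUW hx) hxy
          have hUsub : ((U : Set V) \ {w}) ⊆ S := fun v ⟨h1, h2⟩ => ⟨hUWs h1, h2⟩
          have hUc := hU.1.2 w hwU ⟨x, hx, hxy⟩
          have key : ∀ b : S, (G.induce S).Reachable ⟨x, hxS⟩ b := by
            rintro ⟨b, hbW, hbw⟩
            simp only [Set.mem_singleton_iff] at hbw
            by_cases hbU : b ∈ U
            · have := hUc.preconnected ⟨x, hx, hxy⟩ ⟨b, hbU, hbw⟩
              exact reachable_induce_mono hUsub this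
            · obtain ⟨hbs, hbx, hby⟩ := hWU b (by exact_mod_cast hbW) hbU
              have hwr : w ∉ (p.takeUntil b hbs).support :=
                last_not_mem_takeUntil hp hbs hby
              have hsub : ∀ v ∈ (p.takeUntil b hbs).support, v ∈ S := fun v hv =>
                hmemS v (hsuppW v (Walk.support_takeUntil_subset _ _ hv))
                  (fun hc => hwr (hc ▸ hv))
              exact reachable_induce_of_walk (p.takeUntil b hbs) hsub
          exact (connected_iff _).mpr ⟨fun u v => (key u).symm.trans (key v), ⟨⟨x, hxS⟩⟩⟩
        · -- w ∈ U, w ≠ x, w ≠ y : w not on p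
          have hwp : w ∉ p.support := fun hc => hint w hc hwx hwy hwU
          have hxS : x ∈ S := hmemS x (hUW hx) (Ne.symm hwx)
          have hUsub : ((U : Set V) \ {w}) ⊆ S := fun v ⟨h1, h2⟩ => ⟨hUWs h1, h2⟩
          have hUc := hU.1.2 w hwU ⟨x, hx, Ne.symm hwx⟩
          have key : ∀ b : S, (G.induce S).Reachable ⟨x, hxS⟩ b := by
            rintro ⟨b, hbW, hbw⟩
            simp only [Set.mem_singleton_iff] at hbw
            by_cases hbU : b ∈ U
            · have := hUc.preconnected ⟨x, hx, Ne.symm hwx⟩ ⟨b, hbU, hbw⟩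
              exact reachable_induce_mono hUsub this
            · obtain ⟨hbs, hbx, hby⟩ := hWU b (by exact_mod_cast hbW) hbU
              have hsub : ∀ v ∈ (p.takeUntil b hbs).support, v ∈ S := fun v hv =>
                hmemS v (hsuppW v (Walk.support_takeUntil_subset _ _ hv))
                  (fun hc => hwp (hc ▸ Walk.support_takeUntil_subset _ _ hv))
              exact reachable_induce_of_walk (p.takeUntil b hbs) hsub
          exact (connected_iff _).mpr ⟨fun u v => (key u).symm.trans (key v), ⟨⟨x, hxS⟩⟩⟩
    · -- w ∉ U : w is an interior vertex of p
      obtain ⟨hws, hwx, hwy⟩ := hWU w hwW hwU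
      have hxS : x ∈ S := hmemS x (hUW hx) (Ne.symm hwx)
      have hUsub : (U : Set V) ⊆ S := fun v h1 => ⟨hUWs h1, fun hc => hwU (hc ▸ h1)⟩
      have key : ∀ b : S, (G.induce S).Reachable ⟨x, hxS⟩ b := by
        rintro ⟨b, hbW, hbw⟩
        simp only [Set.mem_singleton_iff] at hbw
        by_cases hbU : b ∈ U
        · have := (hU.1.1).preconnected ⟨x, hx⟩ ⟨b, hbU⟩
          exact reachable_induce_mono hUsub this
        · obtain ⟨hbs, hbx, hby⟩ := hWU b (by exact_mod_cast hbW) hbU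
          have hbmem : b ∈ (p.takeUntil w hws).support ∨ b ∈ (p.dropUntil w hws).support := by
            rw [← Walk.mem_support_append_iff, Walk.take_spec]
            exact hbs
          rcases hbmem with hbt | hbd
          · have hq : (p.takeUntil w hws).IsPath := hp.takeUntil hws
            have hwr : w ∉ ((p.takeUntil w hws).takeUntil b hbt).support :=
              last_not_mem_takeUntil hq hbt hbw
            have hsub : ∀ v ∈ ((p.takeUntil w hws).takeUntil b hbt).support, v ∈ S :=
              fun v hv => hmemS v
                (hsuppW v (Walk.support_takeUntil_subset _ _
                  (Walk.support_takeUntil_subset _ _ hv)))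
                (fun hc => hwr (hc ▸ hv))
            exact reachable_induce_of_walk ((p.takeUntil w hws).takeUntil b hbt) hsub
          · have hq : (p.dropUntil w hws).IsPath := hp.dropUntil hws
            have hwr : w ∉ ((p.dropUntil w hws).dropUntil b hbd).support :=
              head_not_mem_dropUntil hq hbd hbw
            have hsub : ∀ v ∈ ((p.dropUntil w hws).dropUntil b hbd).support, v ∈ S :=
              fun v hv => hmemS v
                (hsuppW v (Walk.support_dropUntil_subset _ _
                  (Walk.support_dropUntil_subset _ _ hv)))
                (fun hc => hwr (hc ▸ hv))
            have hr1 := (reachable_induce_of_walk ((p.dropUntil w hws).dropUntil b hbd) hsub).symm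
            have hyS : y ∈ S := hmemS y (hUW hy) (Ne.symm hwy)
            have hr2 : (G.induce S).Reachable ⟨x, hxS⟩ ⟨y, hyS⟩ := by
              have := (hU.1.1).preconnected ⟨x, hx⟩ ⟨y, hy⟩
              exact reachable_induce_mono hUsub this
            exact hr2.trans hr1
      exact (connected_iff _).mpr ⟨fun u v => (key u).symm.trans (key v), ⟨⟨x, hxS⟩⟩⟩
  have hWeq := hU.2 W hUW ⟨h1, h2⟩
  have : z0 ∈ U := hWeq ▸ hsuppW z0 hz0s
  exact hz0U this

/-- The number of edges of a spanning tree inside a block with vertex set `U` is `|U| - 1`. -/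
lemma block_tree_card (G : SimpleGraph V) (U : Finset V) (hU : IsBlockVertexSet G U)
    {T : Finset (Sym2 V)} (hTE : (T : Set (Sym2 V)) ⊆ G.edgeSet)
    (hHT : (SimpleGraph.fromEdgeSet (T : Set (Sym2 V))).IsTree) :
    (T.filter fun e => ∀ v ∈ e, v ∈ U).card = U.card - 1 := by
  set H := SimpleGraph.fromEdgeSet (T : Set (Sym2 V)) with hH
  have hHG : H ≤ G := by
    rw [hH, ← fromEdgeSet_edgeSet (G := G)]
    exact fromEdgeSet_mono hTE
  set S := T.filter fun e => ∀ v ∈ e, v ∈ U with hSdef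
  have hST : ↑S ⊆ (T : Set (Sym2 V)) := by
    intro e he; simpa using (Finset.mem_filter.mp he).1
  set K := SimpleGraph.induce (U : Set V) (SimpleGraph.fromEdgeSet (S : Set (Sym2 V))) with hK
  have hKadj : ∀ (a b : (U : Set V)), K.Adj a b ↔ s(↑a, ↑b) ∈ S ∧ (a : V) ≠ b := by
    intro a b
    rw [hK]
    constructor
    · intro h
      obtain ⟨h1, h2⟩ := (fromEdgeSet_adj _).mp h
      exact ⟨by exact_mod_cast h1, h2⟩
    · intro ⟨h1, h2⟩
      exact (fromEdgeSet_adj _).mpr ⟨by exact_mod_cast h1, h2⟩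
  -- K is connected
  have hmain : ∀ (n : ℕ) (x y : V) (hx : x ∈ U) (hy : y ∈ U) (p : H.Walk x y),
      p.IsPath → p.length ≤ n → K.Reachable ⟨x, hx⟩ ⟨y, hy⟩ := by
    intro n
    induction n with
    | zero =>
      intro x y hx hy p hp hlen
      cases p with
      | nil => rfl
      | cons h q => simp at hlen
    | succ n ih =>
      intro x y hx hy p hp hlen
      cases p with
      | nil => rfl
      | @cons _ z _ h q =>
        by_cases hzU : z ∈ U
        · have hadj : H.Adj x z := h
          rw [hH, fromEdgeSet_adj] at hadj
          have hSmem : s(x, z) ∈ S := by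
            rw [hSdef, Finset.mem_filter]
            refine ⟨by exact_mod_cast hadj.1, ?_⟩
            intro v hv
            rw [Sym2.mem_iff] at hv
            rcases hv with rfl | rfl
            · exact hx
            · exact hzU
          have hK1 : K.Adj ⟨x, hx⟩ ⟨z, hzU⟩ := (hKadj _ _).mpr ⟨hSmem, hadj.2⟩
          refine hK1.reachable.trans (ih z y hzU hy q ?_ ?_)
          · exact hp.of_cons
          · have := Walk.length_cons h q ▸ hlen; omega
        · -- z ∉ U: contradiction via the ear lemma
          exfalso
          obtain ⟨w, hw, r, r', hspec, hrsupp, hlen'⟩ := exists_first_mem q hy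
          have hpath : (Walk.cons h r).IsPath := by
            have : ((Walk.cons h r).append r') = Walk.cons h q := by
              rw [Walk.cons_append, hspec]
            exact Walk.IsPath.of_append_left (by rw [this]; exact hp)
          have hxw : x ≠ w := by
            rintro rfl
            have hnd := hpath.support_nodup
            rw [Walk.support_cons] at hnd
            exact (List.nodup_cons.mp hnd).1 r.end_mem_support
          have hint : ∀ v ∈ (Walk.cons h r).support, v ≠ x → v ≠ w → v ∉ U := by
            intro v hv hvx hvw
            rw [Walk.support_cons] at hv
            rcases List.mem_cons.mp hv with rfl | hv
            · exact absurd rfl hvx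
            · exact hrsupp v hv hvw
          have hz : ∃ v ∈ (Walk.cons h r).support, v ≠ x ∧ v ≠ w := by
            refine ⟨z, ?_, ?_, ?_⟩
            · rw [Walk.support_cons]
              exact List.mem_cons_of_mem _ r.start_mem_support
            · exact fun hc => (H.ne_of_adj h) hc.symm
            · rintro rfl; exact hzU hw
          have hsupp_eq : ((Walk.cons h r).mapLe hHG).support = (Walk.cons h r).support := by
            rw [Walk.mapLe, Walk.support_map, Walk.support_cons]
            simp only [Hom.ofLE, List.map_cons]
            exact congrArg₂ _ rfl (List.map_id' _)
          have hintG : ∀ v ∈ ((Walk.cons h r).mapLe hHG).support, v ≠ x → v ≠ w → v ∉ U := by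
            rw [hsupp_eq]; exact hint
          have hzG : ∃ v ∈ ((Walk.cons h r).mapLe hHG).support, v ≠ x ∧ v ≠ w := by
            rw [hsupp_eq]; exact hz
          exact ear_absurd G U hU hx hw hxw ((Walk.cons h r).mapLe hHG)
            (hpath.mapLe hHG) hintG hzG
  have hUne : U.Nonempty := by
    obtain ⟨⟨u, hu⟩⟩ := hU.1.1.nonempty
    exact ⟨u, by exact_mod_cast hu⟩
  have hKconn : K.Connected := by
    refine (connected_iff _).mpr ⟨?_, ?_⟩
    · rintro ⟨a, ha⟩ ⟨b, hb⟩
      obtain ⟨p⟩ := hHT.isConnected.preconnected a b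
      exact hmain p.toPath.1.length a b (by exact_mod_cast ha) (by exact_mod_cast hb)
        p.toPath.1 p.toPath.2 le_rfl
    · obtain ⟨u, hu⟩ := hUne
      exact ⟨⟨u, by exact_mod_cast hu⟩⟩
  have hKac : K.IsAcyclic := by
    intro v c hc
    refine hHT.IsAcyclic (c.map ⟨Subtype.val, ?_⟩) (hc.map Subtype.val_injective)
    intro a b hab
    rw [hKadj] at hab
    rw [hH, fromEdgeSet_adj]
    exact ⟨hST (by exact_mod_cast hab.1), hab.2⟩
  have hKtree : K.IsTree := ⟨hKconn, hKac⟩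
  have hcard := hKtree.card_edgeFinset
  have hcount : S.card = K.edgeFinset.card := by
    symm
    refine Finset.card_bij (fun e _ => Sym2.map Subtype.val e) ?_ ?_ ?_
    · intro e he
      induction e with
      | _ a b =>
        rw [mem_edgeFinset, mem_edgeSet, hKadj] at he
        simpa using he.1
    · intro e1 _ e2 _ h
      exact Sym2.map.injective Subtype.val_injective h
    · intro e he
      induction e with
      | _ u v =>
        have heT : s(u, v) ∈ T := (Finset.mem_filter.mp he).1
        have hmem := (Finset.mem_filter.mp he).2
        have hu : u ∈ U := hmem u (by simp)
        have hv : v ∈ U := hmem v (by simp)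
        have hne : u ≠ v := by
          have : s(u, v) ∈ G.edgeSet := hTE (by exact_mod_cast heT)
          rw [mem_edgeSet] at this
          exact this.ne
        refine ⟨s(⟨u, by exact_mod_cast hu⟩, ⟨v, by exact_mod_cast hv⟩), ?_, by simp⟩
        rw [mem_edgeFinset, mem_edgeSet, hKadj]
        exact ⟨he, by simpa using hne⟩
  have hUcard : Fintype.card ((U : Set V) : Type _) = U.card := by simp
  rw [hUcard] at hcard
  rw [hcount]
  omega


end RCurv

open RCurv in
/-- **Local Foster's theorem**: the relative resistances of the edges of a biconnected
component with vertex set `U` sum to `|U| - 1`, for any positive edge weights. -/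
theorem local_foster_theorem {V : Type*} [Fintype V] [DecidableEq V]
    (G : SimpleGraph V) (hG : G.Connected)
    (U : Finset V) (hU : IsBlockVertexSet G U)
    (c : Sym2 V → ℝ) (hc : ∀ e ∈ G.edgeSet, 0 < c e) :
    ∑ e ∈ inducedEdges G U, relRes G c e = (U.card : ℝ) - 1 := by
  classical
  have hUne : U.Nonempty := by
    obtain ⟨⟨u, hu⟩⟩ := hU.1.1.nonempty
    exact ⟨u, by exact_mod_cast hu⟩
  have hSTne : (spanningTrees G).Nonempty := by
    obtain ⟨T, hT1, hT2⟩ := exists_spanning_tree G hG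
    exact ⟨T, Finset.mem_filter.mpr ⟨Finset.mem_univ _, hT1, hT2⟩⟩
  have hpos : ∀ T ∈ spanningTrees G, 0 < ∏ t ∈ T, c t := by
    intro T hT
    have hT' : IsSpanningTree G T := (Finset.mem_filter.mp hT).2
    exact Finset.prod_pos fun t ht => hc t (hT'.1 (by exact_mod_cast ht))
  set Z := ∑ T ∈ spanningTrees G, ∏ t ∈ T, c t with hZdef
  have hZ : 0 < Z := Finset.sum_pos hpos hSTne
  have hcardT : ∀ T ∈ spanningTrees G,
      ((inducedEdges G U).filter fun e => e ∈ T).card = U.card - 1 := by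
    intro T hT
    have hT' : IsSpanningTree G T := (Finset.mem_filter.mp hT).2
    have heq : (inducedEdges G U).filter (fun e => e ∈ T)
        = T.filter fun e => ∀ v ∈ e, v ∈ U := by
      ext e
      simp only [inducedEdges, Finset.mem_filter, SimpleGraph.mem_edgeFinset]
      constructor
      · rintro ⟨⟨_, h2⟩, h3⟩; exact ⟨h3, h2⟩
      · rintro ⟨h1, h2⟩; exact ⟨⟨hT'.1 (by exact_mod_cast h1), h2⟩, h1⟩
    rw [heq]
    exact block_tree_card G U hU hT'.1 hT'.2
  have hnum : ∑ e ∈ inducedEdges G U,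
      (∑ T ∈ (spanningTrees G).filter (fun T => e ∈ T), ∏ t ∈ T, c t)
      = ((U.card : ℝ) - 1) * Z := by
    have h1 : ∀ e, ∑ T ∈ (spanningTrees G).filter (fun T => e ∈ T), ∏ t ∈ T, c t
        = ∑ T ∈ spanningTrees G, if e ∈ T then ∏ t ∈ T, c t else 0 := fun e =>
      (Finset.sum_filter _ _)
    simp_rw [h1]
    rw [Finset.sum_comm]
    have h2 : ∀ T ∈ spanningTrees G,
        (∑ e ∈ inducedEdges G U, if e ∈ T then ∏ t ∈ T, c t else 0)
        = ((U.card : ℝ) - 1) * ∏ t ∈ T, c t := by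
      intro T hT
      rw [← Finset.sum_filter, Finset.sum_const, hcardT T hT, nsmul_eq_mul]
      congr 1
      have : 1 ≤ U.card := Finset.card_pos.mpr hUne
      push_cast [Nat.cast_sub this]
      ring
    rw [Finset.sum_congr rfl h2, ← Finset.mul_sum]
  unfold relRes
  rw [← Finset.sum_div, ← hZdef, hnum]
  field_simp
end

section
/- A finite simple connected loopless graph G is resistance positive (RP) if and only if there exists a probability distribution μ on the set of spanning trees of G with μ(T) > 0 for every spanning tree T, such that for every vertex v ∈ V the expected degree of v in a random spanning tree under μ is strictly smaller than 2, i.e. ∑_T μ(T) · deg_T(v) < 2, where deg_T(v) is the number of edges of T incident to v. -/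
open scoped Classical
set_option linter.unusedSectionVars false
set_option linter.unusedVariables false
set_option maxHeartbeats 1000000

namespace RCurvAux
open SimpleGraph RCurv

variable {V : Type*} [Fintype V] [DecidableEq V]

lemma delete_reachable {H : SimpleGraph V} {v w : V}
    (hr : (H \ SimpleGraph.fromEdgeSet {s(v, w)}).Reachable v w) {x y : V}
    (hxy : H.Reachable x y) : (H \ SimpleGraph.fromEdgeSet {s(v, w)}).Reachable x y := by
  obtain ⟨p⟩ := hxy
  induction p with
  | nil => exact Reachable.refl _
  | @cons a b c h q ih =>
    refine Reachable.trans ?_ ih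
    by_cases he : s(a, b) = s(v, w)
    · rw [Sym2.eq_iff] at he
      rcases he with ⟨rfl, rfl⟩ | ⟨rfl, rfl⟩
      · exact hr
      · exact hr.symm
    · refine Adj.reachable ?_
      rw [sdiff_adj]
      refine ⟨h, ?_⟩
      rw [fromEdgeSet_adj]
      rintro ⟨hmem, -⟩
      exact he (Set.mem_singleton_iff.mp hmem)

lemma mem_spanningTrees {G : SimpleGraph V} {T : Finset (Sym2 V)} :
    T ∈ spanningTrees G ↔ IsSpanningTree G T := by
  simp [spanningTrees]

lemma spanningTrees_nonempty (G : SimpleGraph V) (hG : G.Connected) :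
    (spanningTrees G).Nonempty := by
  classical
  set S : Finset (Finset (Sym2 V)) :=
    Finset.univ.filter
      (fun T => (T : Set (Sym2 V)) ⊆ G.edgeSet ∧ (fromEdgeSet (T : Set (Sym2 V))).Connected)
    with hS
  have hSne : S.Nonempty := by
    refine ⟨G.edgeSet.toFinset, ?_⟩
    rw [hS, Finset.mem_filter]
    refine ⟨Finset.mem_univ _, ?_⟩
    rw [Set.coe_toFinset, fromEdgeSet_edgeSet]
    exact ⟨le_refl _, hG⟩
  obtain ⟨T, hTS, hmin⟩ := S.exists_min_image Finset.card hSne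
  rw [hS, Finset.mem_filter] at hTS
  obtain ⟨-, hTsub, hTconn⟩ := hTS
  refine ⟨T, mem_spanningTrees.mpr ⟨hTsub, hTconn, ?_⟩⟩
  rw [isAcyclic_iff_forall_adj_isBridge]
  intro v w hadj
  by_contra hnb
  rw [isBridge_iff] at hnb
  have hr : (fromEdgeSet (T : Set (Sym2 V)) \ fromEdgeSet {s(v, w)}).Reachable v w := by
    exact not_not.mp hnb
  have hmemT : s(v, w) ∈ T := by
    have := (fromEdgeSet_adj _).mp hadj
    exact_mod_cast this.1
  have hT' : (T.erase s(v, w) : Set (Sym2 V)) = (T : Set (Sym2 V)) \ {s(v, w)} := by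
    simp [Finset.coe_erase]
  have hfe : fromEdgeSet ((T.erase s(v, w) : Finset (Sym2 V)) : Set (Sym2 V))
      = fromEdgeSet (T : Set (Sym2 V)) \ fromEdgeSet {s(v, w)} := by
    rw [hT', fromEdgeSet_sdiff]
  have hconn' : (fromEdgeSet ((T.erase s(v, w) : Finset (Sym2 V)) : Set (Sym2 V))).Connected := by
    rw [hfe]
    haveI := hG.nonempty
    exact ⟨fun x y => delete_reachable hr (hTconn.preconnected x y)⟩
  have hmem' : T.erase s(v, w) ∈ S := by
    rw [hS, Finset.mem_filter]
    exact ⟨Finset.mem_univ _,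
      fun e he => hTsub (Finset.mem_coe.mpr (Finset.mem_of_mem_erase (Finset.mem_coe.mp he))),
      hconn'⟩
  have := hmin _ hmem'
  have hlt : (T.erase s(v, w)).card < T.card := Finset.card_erase_lt_of_mem hmemT
  omega

end RCurvAux

namespace Part2
open SimpleGraph RCurv
variable {V : Type*} [Fintype V] [DecidableEq V]

lemma prod_pos_of_tree {G : SimpleGraph V} {c : Sym2 V → ℝ} (hc : ∀ e ∈ G.edgeSet, 0 < c e)
    {T : Finset (Sym2 V)} (hT : T ∈ RCurv.spanningTrees G) : 0 < ∏ t ∈ T, c t :=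
  Finset.prod_pos fun t ht =>
    hc t ((RCurvAux.mem_spanningTrees.mp hT).1 (Finset.mem_coe.mpr ht))

lemma Z_pos {G : SimpleGraph V} (hG : G.Connected) {c : Sym2 V → ℝ}
    (hc : ∀ e ∈ G.edgeSet, 0 < c e) :
    0 < ∑ T ∈ RCurv.spanningTrees G, ∏ t ∈ T, c t :=
  Finset.sum_pos (fun T hT => prod_pos_of_tree hc hT) (RCurvAux.spanningTrees_nonempty G hG)

lemma card_filter_deg {G : SimpleGraph V} {T : Finset (Sym2 V)}
    (hT : (T : Set (Sym2 V)) ⊆ G.edgeSet) (v : V) :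
    (T.filter fun e => v ∈ e).card = ((G.neighborFinset v).filter fun u => s(u, v) ∈ T).card := by
  refine (Finset.card_bij (fun u _ => s(u, v)) ?_ ?_ ?_).symm
  · intro u hu
    rw [Finset.mem_filter] at hu ⊢
    exact ⟨hu.2, Sym2.mem_mk_right u v⟩
  · intro u hu u' hu' h
    exact Sym2.congr_left.mp h
  · intro e he
    rw [Finset.mem_filter] at he
    obtain ⟨heT, hve⟩ := he
    induction e using Sym2.inductionOn with
    | hf a b =>
      have hadj : G.Adj a b := G.mem_edgeSet.mp (hT (Finset.mem_coe.mpr heT))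
      rcases Sym2.mem_iff.mp hve with rfl | rfl
      · refine ⟨b, Finset.mem_filter.mpr ⟨(G.mem_neighborFinset _ _).mpr hadj, ?_⟩, ?_⟩
        · rwa [Sym2.eq_swap]
        · exact Sym2.eq_swap
      · exact ⟨a, Finset.mem_filter.mpr ⟨(G.mem_neighborFinset _ _).mpr hadj.symm, heT⟩, rfl⟩

lemma sum_neighbors_eq {G : SimpleGraph V} (f : Finset (Sym2 V) → ℝ) (v : V) :
    ∑ u ∈ G.neighborFinset v, ∑ T ∈ (RCurv.spanningTrees G).filter (fun T => s(u, v) ∈ T), f T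
      = ∑ T ∈ RCurv.spanningTrees G, f T * ((T.filter fun e => v ∈ e).card : ℝ) := by
  have h1 : ∀ u : V, ∑ T ∈ (RCurv.spanningTrees G).filter (fun T => s(u, v) ∈ T), f T
      = ∑ T ∈ RCurv.spanningTrees G, if s(u, v) ∈ T then f T else 0 := fun u =>
    Finset.sum_filter _ _
  rw [Finset.sum_congr rfl (fun u _ => h1 u), Finset.sum_comm]
  refine Finset.sum_congr rfl fun T hT => ?_
  rw [card_filter_deg (RCurvAux.mem_spanningTrees.mp hT).1 v, ← Finset.sum_filter,
    Finset.sum_const, nsmul_eq_mul, mul_comm]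

lemma relRes_eq_sum {G : SimpleGraph V} (c : Sym2 V → ℝ) (e : Sym2 V) :
    relRes G c e = ∑ T ∈ (RCurv.spanningTrees G).filter (fun T => e ∈ T),
      (∏ t ∈ T, c t) / (∑ T ∈ RCurv.spanningTrees G, ∏ t ∈ T, c t) := by
  rw [relRes, Finset.sum_div]

lemma curv_eq {G : SimpleGraph V} (c : Sym2 V → ℝ) (v : V) :
    curv G c v = 1 - (1 / 2) * ∑ T ∈ RCurv.spanningTrees G,
      ((∏ t ∈ T, c t) / (∑ T ∈ RCurv.spanningTrees G, ∏ t ∈ T, c t)) *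
        ((T.filter fun e => v ∈ e).card : ℝ) := by
  rw [curv, Finset.sum_congr rfl fun u _ => relRes_eq_sum c s(u, v), sum_neighbors_eq]

end Part2

namespace Part3
open SimpleGraph RCurv
variable {V : Type*} [Fintype V] [DecidableEq V]

noncomputable def dotp (x y : Sym2 V → ℝ) : ℝ := ∑ e : Sym2 V, x e * y e

lemma dotp_ind (T : Finset (Sym2 V)) (w : Sym2 V → ℝ) :
    dotp (indVec T) w = ∑ e ∈ T, w e := by
  simp [dotp, indVec, ite_mul, Finset.sum_ite_mem, Finset.univ_inter]

lemma dotp_msum (s : Finset (Finset (Sym2 V))) (g : Finset (Sym2 V) → ℝ) (w : Sym2 V → ℝ) :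
    dotp (fun e => ∑ T ∈ s, g T * indVec T e) w = ∑ T ∈ s, g T * ∑ e ∈ T, w e := by
  unfold dotp
  simp_rw [Finset.sum_mul, mul_assoc]
  rw [Finset.sum_comm]
  refine Finset.sum_congr rfl fun T _ => ?_
  rw [← Finset.mul_sum]
  congr 1
  exact dotp_ind T w

variable (G : SimpleGraph V)

noncomputable def Zf (θ : Sym2 V → ℝ) : ℝ :=
  ∑ T ∈ RCurv.spanningTrees G, Real.exp (∑ e ∈ T, θ e)

noncomputable def margin (μ : Finset (Sym2 V) → ℝ) : Sym2 V → ℝ :=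
  fun e => ∑ T ∈ RCurv.spanningTrees G, μ T * indVec T e

noncomputable def rv (θ : Sym2 V → ℝ) : Sym2 V → ℝ :=
  fun e => ∑ T ∈ RCurv.spanningTrees G, (Real.exp (∑ t ∈ T, θ t) / Zf G θ) * indVec T e

noncomputable def Ff (μ : Finset (Sym2 V) → ℝ) (θ : Sym2 V → ℝ) : ℝ :=
  Real.log (Zf G θ) - dotp (margin G μ) θ

lemma Zf_pos (hne : (RCurv.spanningTrees G).Nonempty) (θ : Sym2 V → ℝ) : 0 < Zf G θ :=
  Finset.sum_pos (fun T _ => Real.exp_pos _) hne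

lemma hasDeriv (hne : (RCurv.spanningTrees G).Nonempty) (μ : Finset (Sym2 V) → ℝ)
    (θ w : Sym2 V → ℝ) :
    HasDerivAt (fun s : ℝ => Ff G μ (θ + s • w))
      (dotp (rv G θ) w - dotp (margin G μ) w) 0 := by
  classical
  set a : Finset (Sym2 V) → ℝ := fun T => ∑ e ∈ T, θ e with ha
  set b : Finset (Sym2 V) → ℝ := fun T => ∑ e ∈ T, w e with hb
  have hsum : ∀ (s : ℝ) (T : Finset (Sym2 V)), ∑ e ∈ T, (θ + s • w) e = a T + b T * s := by
    intro s T
    simp only [Pi.add_apply, Pi.smul_apply, smul_eq_mul, ha, hb]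
    rw [Finset.sum_add_distrib, ← Finset.mul_sum, mul_comm]
  have hfun : (fun s : ℝ => Ff G μ (θ + s • w))
      = fun s : ℝ => Real.log (∑ T ∈ RCurv.spanningTrees G, Real.exp (a T + b T * s))
          - (dotp (margin G μ) θ + dotp (margin G μ) w * s) := by
    funext s
    rw [Ff, Zf]
    congr 1
    · congr 1
      exact Finset.sum_congr rfl fun T _ => by rw [hsum s T]
    · unfold dotp
      simp only [Pi.add_apply, Pi.smul_apply, smul_eq_mul]
      rw [Finset.sum_mul, ← Finset.sum_add_distrib]
      refine Finset.sum_congr rfl fun e _ => by ring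
  rw [hfun]
  have h1 : HasDerivAt
      (fun s : ℝ => ∑ T ∈ RCurv.spanningTrees G, Real.exp (a T + b T * s))
      (∑ T ∈ RCurv.spanningTrees G, Real.exp (a T) * b T) 0 := by
    have := HasDerivAt.fun_sum (u := RCurv.spanningTrees G)
      (A := fun T s => Real.exp (a T + b T * s))
      (A' := fun T => Real.exp (a T) * b T) (x := 0)
      (fun T _ => by
        have h := (((hasDerivAt_id (0 : ℝ)).const_mul (b T)).const_add (a T)).exp
        simpa using h)
    simpa using this
  have h2 : HasDerivAt
      (fun s : ℝ => Real.log (∑ T ∈ RCurv.spanningTrees G, Real.exp (a T + b T * s)))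
      ((∑ T ∈ RCurv.spanningTrees G, Real.exp (a T) * b T) / Zf G θ) 0 := by
    have hne' : (∑ T ∈ RCurv.spanningTrees G, Real.exp (a T + b T * 0)) ≠ 0 := by
      simpa [Zf, ha] using (Zf_pos G hne θ).ne'
    have := h1.log hne'
    have hz : (∑ T ∈ RCurv.spanningTrees G, Real.exp (a T + b T * 0)) = Zf G θ := by
      simp [Zf, ha]
    rwa [hz] at this
  have h3 : HasDerivAt (fun s : ℝ => dotp (margin G μ) θ + dotp (margin G μ) w * s)
      (dotp (margin G μ) w) 0 := by
    have h := ((hasDerivAt_id (0 : ℝ)).const_mul (dotp (margin G μ) w)).const_add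
      (dotp (margin G μ) θ)
    simpa using h
  have := h2.sub h3
  have hr : dotp (rv G θ) w
      = (∑ T ∈ RCurv.spanningTrees G, Real.exp (a T) * b T) / Zf G θ := by
    unfold rv
    rw [dotp_msum]
    rw [Finset.sum_div]
    exact Finset.sum_congr rfl fun T _ => by rw [div_mul_eq_mul_div]
  rwa [← hr] at this

end Part3

namespace Part4
open SimpleGraph RCurv Part3
variable {V : Type*} [Fintype V] [DecidableEq V]

lemma dotp_sub_left (x y w : Sym2 V → ℝ) : dotp (x - y) w = dotp x w - dotp y w := by
  simp [dotp, sub_mul, Finset.sum_sub_distrib]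

lemma dotp_smul_right (x : Sym2 V → ℝ) (c : ℝ) (y : Sym2 V → ℝ) :
    dotp x (c • y) = c * dotp x y := by
  simp [dotp, Finset.mul_sum]
  exact Finset.sum_congr rfl fun e _ => by ring

lemma eq_zero_of_dotp_self {x : Sym2 V → ℝ} (h : dotp x x = 0) : x = 0 := by
  have h2 : ∀ e ∈ (Finset.univ : Finset (Sym2 V)), x e * x e = 0 := by
    rw [← Finset.sum_eq_zero_iff_of_nonneg (fun e _ => mul_self_nonneg (x e))]
    exact h
  funext e
  exact mul_self_eq_zero.mp (h2 e (Finset.mem_univ e))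

/-- continuity of `θ ↦ dotp x θ` -/
lemma dotp_continuous (x : Sym2 V → ℝ) : Continuous (fun θ : Sym2 V → ℝ => dotp x θ) :=
  continuous_finset_sum _ fun e _ => continuous_const.mul (continuous_apply e)

lemma exists_theta (G : SimpleGraph V) (hne : (RCurv.spanningTrees G).Nonempty)
    (μ : Finset (Sym2 V) → ℝ) (hμpos : ∀ T ∈ RCurv.spanningTrees G, 0 < μ T)
    (hμ1 : ∑ T ∈ RCurv.spanningTrees G, μ T = 1) :
    ∃ θ : Sym2 V → ℝ, rv G θ = margin G μ := by
  classical
  obtain ⟨T0, hT0⟩ := hne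
  set ST := RCurv.spanningTrees G with hST
  set m : Sym2 V → ℝ := margin G μ with hm
  set W : Submodule ℝ (Sym2 V → ℝ) :=
    Submodule.span ℝ ((fun T => indVec T - indVec T0) '' (ST : Set (Finset (Sym2 V)))) with hW
  have hWmem : ∀ T ∈ ST, indVec T - indVec T0 ∈ W := fun T hT =>
    Submodule.subset_span ⟨T, hT, rfl⟩
  -- orthogonality to generators implies orthogonality to W
  have horth : ∀ θ : Sym2 V → ℝ,
      (∀ T ∈ ST, dotp (indVec T - indVec T0) θ = 0) → ∀ x ∈ W, dotp x θ = 0 := by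
    intro θ hθ x hx
    let L : (Sym2 V → ℝ) →ₗ[ℝ] ℝ :=
      { toFun := fun y => dotp y θ
        map_add' := fun y z => by simp [dotp, add_mul, Finset.sum_add_distrib]
        map_smul' := fun c y => by
          simp [dotp, Finset.mul_sum]
          exact Finset.sum_congr rfl fun e _ => by ring }
    have hle : W ≤ LinearMap.ker L := by
      rw [hW, Submodule.span_le]
      rintro - ⟨T, hT, rfl⟩
      exact LinearMap.mem_ker.mpr (hθ T hT)
    exact hle hx
  -- margin as weighted sum of tree-sums
  have hmdot : ∀ θ : Sym2 V → ℝ, dotp m θ = ∑ T ∈ ST, μ T * dotp (indVec T) θ := by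
    intro θ
    rw [hm]
    unfold margin
    rw [dotp_msum]
    exact Finset.sum_congr rfl fun T _ => by rw [dotp_ind]
  -- positivity of the "max" functional on W \ {0}
  have hgpos : ∀ θ : Sym2 V → ℝ, θ ∈ W → θ ≠ 0 →
      ∃ T ∈ ST, 0 < dotp (indVec T) θ - dotp m θ := by
    intro θ hθW hθ0
    by_contra hcon
    push_neg at hcon
    have hall : ∀ T ∈ ST, dotp (indVec T) θ = dotp m θ := by
      have hzero : ∑ T ∈ ST, μ T * (dotp m θ - dotp (indVec T) θ) = 0 := by
        rw [Finset.sum_congr rfl fun T _ => mul_sub (μ T) _ _, Finset.sum_sub_distrib,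
          ← Finset.sum_mul, hμ1, one_mul, ← hmdot θ, sub_self]
      intro T hT
      have hterm := (Finset.sum_eq_zero_iff_of_nonneg
        (fun T hT => mul_nonneg (hμpos T hT).le (by linarith [hcon T hT]))).mp hzero T hT
      have := mul_eq_zero.mp hterm
      rcases this with h | h
      · exact absurd h (hμpos T hT).ne'
      · linarith
    have : dotp θ θ = 0 := by
      refine horth θ ?_ θ hθW
      intro T hT
      rw [dotp_sub_left, hall T hT, hall T0 hT0, sub_self]
    exact hθ0 (eq_zero_of_dotp_self this)
  -- lower bound for Ff in each tree direction
  have hFlb : ∀ (T : Finset (Sym2 V)), T ∈ ST → ∀ θ : Sym2 V → ℝ,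
      dotp (indVec T) θ - dotp m θ ≤ Ff G μ θ := by
    intro T hT θ
    have hzpos : 0 < Zf G θ := Zf_pos G ⟨T0, hT0⟩ θ
    have h1 : dotp (indVec T) θ ≤ Real.log (Zf G θ) := by
      rw [Real.le_log_iff_exp_le hzpos, dotp_ind]
      exact Finset.single_le_sum (f := fun T => Real.exp (∑ e ∈ T, θ e))
        (fun T _ => (Real.exp_pos _).le) hT
    have : Ff G μ θ = Real.log (Zf G θ) - dotp m θ := rfl
    linarith
  -- difference lies in W
  have hrm : ∀ θ : Sym2 V → ℝ, rv G θ - m ∈ W := by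
    intro θ
    have hν1 : ∑ T ∈ ST, Real.exp (∑ t ∈ T, θ t) / Zf G θ = 1 := by
      rw [← Finset.sum_div]
      exact div_self (Zf_pos G ⟨T0, hT0⟩ θ).ne'
    have hkey : rv G θ - m
        = ∑ T ∈ ST, (Real.exp (∑ t ∈ T, θ t) / Zf G θ - μ T) • (indVec T - indVec T0) := by
      funext e
      rw [Finset.sum_apply]
      simp only [Pi.sub_apply, Pi.smul_apply, smul_eq_mul]
      have : ∀ T ∈ ST, (Real.exp (∑ t ∈ T, θ t) / Zf G θ - μ T) * (indVec T e - indVec T0 e)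
          = (Real.exp (∑ t ∈ T, θ t) / Zf G θ) * indVec T e - μ T * indVec T e
            - (Real.exp (∑ t ∈ T, θ t) / Zf G θ - μ T) * indVec T0 e := fun T _ => by ring
      rw [Finset.sum_congr rfl this, Finset.sum_sub_distrib, Finset.sum_sub_distrib,
        ← Finset.sum_mul, Finset.sum_sub_distrib, hν1, hμ1, sub_self, zero_mul, sub_zero]
      rfl
    rw [hkey]
    exact Submodule.sum_mem _ fun T hT => Submodule.smul_mem _ _ (hWmem T hT)
  -- case: W is trivial
  by_cases hWtriv : ∀ θ : Sym2 V → ℝ, θ ∈ W → θ = 0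
  · refine ⟨0, ?_⟩
    have := hWtriv _ (hrm 0)
    rwa [sub_eq_zero] at this
  -- main case
  push_neg at hWtriv
  obtain ⟨ξ, hξW, hξ0⟩ := hWtriv
  -- the compact sphere in W
  set S : Set (Sym2 V → ℝ) := (W : Set (Sym2 V → ℝ)) ∩ Metric.sphere 0 1 with hS
  have hScomp : IsCompact S :=
    (isCompact_sphere (0 : Sym2 V → ℝ) 1).inter_left W.closed_of_finiteDimensional
  have hSne : S.Nonempty := by
    refine ⟨‖ξ‖⁻¹ • ξ, W.smul_mem _ hξW, ?_⟩
    rw [Metric.mem_sphere, dist_zero_right]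
    exact norm_smul_inv_norm hξ0
  set h : (Sym2 V → ℝ) → ℝ :=
    fun θ => ∑ T ∈ ST, max (dotp (indVec T) θ - dotp m θ) 0 with hh
  have hhcont : Continuous h :=
    continuous_finset_sum _ fun T _ =>
      ((dotp_continuous (indVec T)).sub (dotp_continuous m)).max continuous_const
  obtain ⟨u0, hu0S, hu0min⟩ := hScomp.exists_isMinOn hSne hhcont.continuousOn
  set δ : ℝ := h u0 with hδ
  have hδpos : 0 < δ := by
    obtain ⟨hu0W, hu0s⟩ := hu0S
    have hu0ne : u0 ≠ 0 := by
      intro h0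
      rw [Metric.mem_sphere, dist_zero_right, h0, norm_zero] at hu0s
      norm_num at hu0s
    obtain ⟨T, hT, hTpos⟩ := hgpos u0 hu0W hu0ne
    exact Finset.sum_pos' (fun T _ => le_max_right _ 0)
      ⟨T, hT, lt_max_iff.mpr (Or.inl hTpos)⟩
  set Ncard : ℝ := (ST.card : ℝ) with hN
  have hNpos : 0 < Ncard := by
    rw [hN]
    exact_mod_cast Finset.card_pos.mpr ⟨T0, hT0⟩
  set ε : ℝ := δ / Ncard with hε
  have hεpos : 0 < ε := div_pos hδpos hNpos
  -- coercivity: Ff ≥ ε * ‖θ‖ on W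
  have hcoer : ∀ θ : Sym2 V → ℝ, θ ∈ W → θ ≠ 0 → ε * ‖θ‖ ≤ Ff G μ θ := by
    intro θ hθW hθ0
    set u : Sym2 V → ℝ := ‖θ‖⁻¹ • θ with hu
    have huS : u ∈ S := by
      refine ⟨W.smul_mem _ hθW, ?_⟩
      rw [Metric.mem_sphere, dist_zero_right]
      exact norm_smul_inv_norm hθ0
    have hδu : δ ≤ h u := hu0min huS
    -- find T with dotp (indVec T) u - dotp m u ≥ ε
    have hex : ∃ T ∈ ST, ε ≤ dotp (indVec T) u - dotp m u := by
      by_contra hcon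
      push_neg at hcon
      have : h u < ∑ T ∈ ST, ε := by
        refine Finset.sum_lt_sum_of_nonempty ⟨T0, hT0⟩ fun T hT => ?_
        exact max_lt (hcon T hT) hεpos
      rw [Finset.sum_const, nsmul_eq_mul, hε] at this
      rw [mul_div_cancel₀ _ hNpos.ne'] at this
      linarith
    obtain ⟨T, hT, hTε⟩ := hex
    have hθu : θ = ‖θ‖ • u := by
      rw [hu, smul_smul, mul_inv_cancel₀ (norm_ne_zero_iff.mpr hθ0), one_smul]
    have hscale : dotp (indVec T) θ - dotp m θ = ‖θ‖ * (dotp (indVec T) u - dotp m u) := by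
      have e1 := dotp_smul_right (indVec T) ‖θ‖ u
      have e2 := dotp_smul_right m ‖θ‖ u
      rw [← hθu] at e1 e2
      rw [e1, e2]
      ring
    have hnn : (0:ℝ) ≤ ‖θ‖ := norm_nonneg θ
    calc ε * ‖θ‖ ≤ ‖θ‖ * (dotp (indVec T) u - dotp m u) := by
          rw [mul_comm]
          exact mul_le_mul_of_nonneg_left hTε hnn
      _ = dotp (indVec T) θ - dotp m θ := hscale.symm
      _ ≤ Ff G μ θ := hFlb T hT θ
  -- continuity of Ff
  have hFcont : Continuous (Ff G μ) := by
    have hZcont : Continuous (Zf G) :=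
      continuous_finset_sum _ fun T _ =>
        Real.continuous_exp.comp (continuous_finset_sum _ fun e _ => continuous_apply e)
    exact (hZcont.log fun θ => (Zf_pos G ⟨T0, hT0⟩ θ).ne').sub (dotp_continuous m)
  -- compact ball in W
  set R : ℝ := (max (Ff G μ 0) 0 + 1) / ε with hR
  have hRpos : 0 < R := div_pos (by positivity) hεpos
  set K : Set (Sym2 V → ℝ) := (W : Set (Sym2 V → ℝ)) ∩ Metric.closedBall 0 R with hK
  have hKcomp : IsCompact K :=
    (isCompact_closedBall (0 : Sym2 V → ℝ) R).inter_left W.closed_of_finiteDimensional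
  have hKne : K.Nonempty :=
    ⟨0, W.zero_mem, Metric.mem_closedBall.mpr (by rw [_root_.dist_self]; exact hRpos.le)⟩
  obtain ⟨θ0, hθ0K, hθ0min⟩ := hKcomp.exists_isMinOn hKne hFcont.continuousOn
  have hθ0W : θ0 ∈ W := hθ0K.1
  -- global minimality on W
  have hglobal : ∀ θ : Sym2 V → ℝ, θ ∈ W → Ff G μ θ0 ≤ Ff G μ θ := by
    intro θ hθW
    by_cases hball : ‖θ‖ ≤ R
    · exact hθ0min ⟨hθW, Metric.mem_closedBall.mpr (by rwa [dist_zero_right])⟩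
    · push_neg at hball
      have hθ0' : θ ≠ 0 := by
        intro h0
        rw [h0, norm_zero] at hball
        linarith
      have h1 : ε * ‖θ‖ ≤ Ff G μ θ := hcoer θ hθW hθ0'
      have h2 : max (Ff G μ 0) 0 + 1 ≤ ε * ‖θ‖ := by
        have hmle : R * ε ≤ ‖θ‖ * ε := mul_le_mul_of_nonneg_right hball.le hεpos.le
        rw [hR, div_mul_cancel₀ _ hεpos.ne'] at hmle
        have hcomm : ε * ‖θ‖ = ‖θ‖ * ε := mul_comm _ _
        linarith
      have h3 : Ff G μ θ0 ≤ Ff G μ 0 :=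
        hθ0min ⟨W.zero_mem, Metric.mem_closedBall.mpr (by rw [_root_.dist_self]; exact hRpos.le)⟩
      have h4 : Ff G μ 0 ≤ max (Ff G μ 0) 0 := le_max_left _ _
      linarith
  -- the critical point equation
  refine ⟨θ0, ?_⟩
  have hcrit : ∀ w : Sym2 V → ℝ, w ∈ W → dotp (rv G θ0 - m) w = 0 := by
    intro w hw
    have hloc : IsLocalMin (fun s : ℝ => Ff G μ (θ0 + s • w)) 0 := by
      refine Filter.Eventually.of_forall fun s => ?_
      show Ff G μ (θ0 + (0:ℝ) • w) ≤ Ff G μ (θ0 + s • w)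
      rw [zero_smul, add_zero]
      exact hglobal _ (W.add_mem hθ0W (W.smul_mem _ hw))
    have hder := hloc.hasDerivAt_eq_zero (hasDeriv G ⟨T0, hT0⟩ μ θ0 w)
    rw [dotp_sub_left]
    exact hder
  have hx := hcrit _ (hrm θ0)
  have := eq_zero_of_dotp_self hx
  rwa [sub_eq_zero] at this

end Part4

namespace Part5
open SimpleGraph RCurv
variable {V : Type*} [Fintype V] [DecidableEq V]

lemma rv_eq (G : SimpleGraph V) (θ : Sym2 V → ℝ) (e : Sym2 V) :
    Part3.rv G θ e = (∑ T ∈ (RCurv.spanningTrees G).filter (fun T => e ∈ T),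
      Real.exp (∑ t ∈ T, θ t)) / Part3.Zf G θ := by
  unfold Part3.rv
  rw [Finset.sum_div, Finset.sum_filter]
  refine Finset.sum_congr rfl fun T _ => ?_
  unfold RCurv.indVec
  rw [mul_ite, mul_one, mul_zero]

lemma margin_filter (G : SimpleGraph V) (μ : Finset (Sym2 V) → ℝ) (e : Sym2 V) :
    Part3.margin G μ e = ∑ T ∈ (RCurv.spanningTrees G).filter (fun T => e ∈ T), μ T := by
  unfold Part3.margin RCurv.indVec
  simp only [mul_ite, mul_one, mul_zero]
  exact (Finset.sum_filter _ _).symm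

end Part5


open RCurv in
/-- A graph is resistance positive iff there is a positive probability distribution on its
spanning trees under which every vertex has expected degree strictly smaller than `2`. -/
theorem isRP_iff_exists_distribution {V : Type*} [Fintype V] [DecidableEq V]
    (G : SimpleGraph V) (hG : G.Connected) :
    IsRP G ↔
      ∃ μ : Finset (Sym2 V) → ℝ,
        (∀ T ∈ spanningTrees G, 0 < μ T) ∧
        (∑ T ∈ spanningTrees G, μ T = 1) ∧
        ∀ v : V, ∑ T ∈ spanningTrees G, μ T * ((T.filter fun e => v ∈ e).card : ℝ) < 2 := by
  constructor
  · rintro ⟨c, hc, hcurv⟩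
    have hZpos := Part2.Z_pos hG hc
    refine ⟨fun T => (∏ t ∈ T, c t) / (∑ T ∈ spanningTrees G, ∏ t ∈ T, c t),
      fun T hT => div_pos (Part2.prod_pos_of_tree hc hT) hZpos, ?_, ?_⟩
    · rw [← Finset.sum_div]
      exact div_self hZpos.ne'
    · intro v
      have h := hcurv v
      rw [Part2.curv_eq c v] at h
      linarith
  · rintro ⟨μ, hμpos, hμ1, hμdeg⟩
    have hne := RCurvAux.spanningTrees_nonempty G hG
    obtain ⟨θ, hθ⟩ := Part4.exists_theta G hne μ hμpos hμ1
    refine ⟨fun e => Real.exp (θ e), fun e _ => Real.exp_pos _, ?_⟩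
    intro v
    have hrel : ∀ e : Sym2 V, relRes G (fun e => Real.exp (θ e)) e = Part3.margin G μ e := by
      intro e
      rw [← hθ, relRes]
      simp only [← Real.exp_sum]
      exact (Part5.rv_eq G θ e).symm
    rw [curv, Finset.sum_congr rfl fun u _ => hrel s(u, v),
      Finset.sum_congr rfl fun u _ => Part5.margin_filter G μ s(u, v),
      Part2.sum_neighbors_eq]
    have := hμdeg v
    linarith
end

section
/- Let G = (V, E) be a finite simple connected loopless graph and let Θ(G) = P(G) ∩ 2M(G). A point x ∈ ℝ^E with integer coordinates lies in Θ(G) if and only if x = e_H is the indicator vector of the edge set H of a Hamiltonian path of G, i.e. a spanning tree of G that is a path visiting every vertex exactly once. -/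
open scoped Classical

section Aux
variable {V : Type*} [Fintype V] [DecidableEq V]

lemma acyclic_mono' {G G' : SimpleGraph V} (h : G ≤ G') (hG' : G'.IsAcyclic) : G.IsAcyclic :=
  fun _ c hc => hG' (c.mapLe h) (hc.mapLe h)

lemma card_filter_eq_degree (H : Finset (Sym2 V)) (hd : ∀ e ∈ H, ¬ e.IsDiag) (v : V) :
    (H.filter fun e => v ∈ e).card
      = (SimpleGraph.fromEdgeSet (↑H : Set (Sym2 V))).degree v := by
  classical
  rw [SimpleGraph.degree]
  rw [show (H.filter fun e => v ∈ e)
      = ((SimpleGraph.fromEdgeSet (↑H : Set (Sym2 V))).neighborFinset v).image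
          (fun w => s(v, w)) from ?_]
  · rw [Finset.card_image_of_injective _ fun a b hab => Sym2.congr_right.mp hab]
  · ext e
    simp only [Finset.mem_filter, Finset.mem_image, SimpleGraph.mem_neighborFinset,
      SimpleGraph.fromEdgeSet_adj, Finset.mem_coe]
    constructor
    · rintro ⟨heH, hve⟩
      exact ⟨Sym2.Mem.other hve, ⟨by rw [Sym2.other_spec hve]; exact heH,
        (Sym2.other_ne (hd e heH) hve).symm⟩, Sym2.other_spec hve⟩
    · rintro ⟨w, ⟨hw, _⟩, rfl⟩
      exact ⟨hw, Sym2.mem_mk_left v w⟩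

lemma exists_leaf (H : Finset (Sym2 V)) (hne : H.Nonempty) (hd : ∀ e ∈ H, ¬ e.IsDiag)
    (hac : (SimpleGraph.fromEdgeSet (↑H : Set (Sym2 V))).IsAcyclic) :
    ∃ v : V, (H.filter fun e => v ∈ e).card = 1 := by
  classical
  set G' := SimpleGraph.fromEdgeSet (↑H : Set (Sym2 V)) with hG'
  -- a path of length 1 exists
  obtain ⟨e, heH⟩ := hne
  induction e using Sym2.ind with
  | _ a b =>
  have hab : G'.Adj a b := by
    rw [hG', SimpleGraph.fromEdgeSet_adj]
    exact ⟨heH, fun h => hd _ heH (Sym2.mk_isDiag_iff.mpr h)⟩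
  set S : Set ℕ := {n | ∃ (u v : V) (p : G'.Walk u v), p.IsPath ∧ p.length = n} with hS
  have h1S : 1 ∈ S := ⟨a, b, SimpleGraph.Walk.cons hab SimpleGraph.Walk.nil,
    by simp [SimpleGraph.Walk.cons_isPath_iff, hab.ne], by simp⟩
  have hbdd : BddAbove S := by
    refine ⟨Fintype.card V, ?_⟩
    rintro n ⟨u, v, p, hp, rfl⟩
    exact (hp.length_lt).le
  have hNS : sSup S ∈ S := Nat.sSup_mem ⟨1, h1S⟩ hbdd
  obtain ⟨u, v, p, hp, hNlen⟩ := hNS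
  have hN1 : 1 ≤ p.length := by rw [hNlen]; exact le_csSup hbdd h1S
  -- work with q = p.reverse, a path starting at v
  have hq : p.reverse.IsPath := hp.reverse
  have hqlen : p.reverse.length = sSup S := by rw [SimpleGraph.Walk.length_reverse, hNlen]
  cases hq' : p.reverse with
  | nil =>
    exfalso
    have := hqlen
    rw [hq'] at this
    simp at this
    omega
  | cons hvb r =>
    rename_i c
    rw [hq'] at hq hqlen
    rw [SimpleGraph.Walk.cons_isPath_iff] at hq
    obtain ⟨hr, hvr⟩ := hq
    refine ⟨v, ?_⟩
    rw [card_filter_eq_degree H hd v]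
    have : G'.neighborFinset v = {c} := by
      ext w
      simp only [SimpleGraph.mem_neighborFinset, Finset.mem_singleton]
      constructor
      · intro hvw
        by_contra hwc
        by_cases hws : w ∈ (SimpleGraph.Walk.cons hvb r).support
        · -- two distinct paths from v to w: contradiction with acyclicity
          set q := SimpleGraph.Walk.cons hvb r with hqdef
          have hqpath : q.IsPath := by
            rw [SimpleGraph.Walk.cons_isPath_iff]; exact ⟨hr, hvr⟩
          have r1 : G'.Walk v w := q.takeUntil w hws
          have hr1 : (q.takeUntil w hws).IsPath := hqpath.takeUntil hws
          have hr2 : (SimpleGraph.Walk.cons hvw SimpleGraph.Walk.nil : G'.Walk v w).IsPath := by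
            simp [SimpleGraph.Walk.cons_isPath_iff, hvw.ne]
          have heq := hac.path_unique ⟨q.takeUntil w hws, hr1⟩ ⟨_, hr2⟩
          have heq' : q.takeUntil w hws = SimpleGraph.Walk.cons hvw SimpleGraph.Walk.nil :=
            congrArg Subtype.val heq
          have hmem : s(v, w) ∈ q.edges := by
            apply SimpleGraph.Walk.edges_takeUntil_subset q hws
            rw [heq']
            simp
          rw [hqdef] at hmem
          simp only [SimpleGraph.Walk.edges_cons, List.mem_cons] at hmem
          rcases hmem with hmem | hmem
          · exact hwc (Sym2.congr_right.mp hmem)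
          · exact hvr (SimpleGraph.Walk.fst_mem_support_of_mem_edges r hmem)
        · -- extend the path: contradiction with maximality
          have hlong : (SimpleGraph.Walk.cons hvw.symm (SimpleGraph.Walk.cons hvb r)).IsPath := by
            rw [SimpleGraph.Walk.cons_isPath_iff]
            exact ⟨by rw [SimpleGraph.Walk.cons_isPath_iff]; exact ⟨hr, hvr⟩, hws⟩
          have : (SimpleGraph.Walk.cons hvw.symm (SimpleGraph.Walk.cons hvb r)).length ∈ S :=
            ⟨w, u, _, hlong, rfl⟩
          have hle := le_csSup hbdd this
          simp only [SimpleGraph.Walk.length_cons] at hle hqlen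
          omega
      · rintro rfl
        exact hvb
    rw [show (SimpleGraph.fromEdgeSet (↑H : Set (Sym2 V))).degree v = (G'.neighborFinset v).card from rfl, this]
    simp

open RCurv in
lemma split_matchings (G : SimpleGraph V) :
    ∀ (n : ℕ) (H : Finset (Sym2 V)), H.card = n →
      (↑H : Set (Sym2 V)) ⊆ G.edgeSet →
      (SimpleGraph.fromEdgeSet (↑H : Set (Sym2 V))).IsAcyclic →
      (∀ v : V, (H.filter fun e => v ∈ e).card ≤ 2) →
      ∃ M1 M2 : Finset (Sym2 V), IsMatching' G M1 ∧ IsMatching' G M2 ∧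
        Disjoint M1 M2 ∧ M1 ∪ M2 = H := by
  intro n
  induction n using Nat.strong_induction_on with
  | _ n ih =>
  intro H hcard hsub hac hdeg
  rcases Finset.eq_empty_or_nonempty H with rfl | hne
  · exact ⟨∅, ∅, ⟨by simp, by simp⟩, ⟨by simp, by simp⟩, by simp, by simp⟩
  · have hd : ∀ e ∈ H, ¬ e.IsDiag := fun e he =>
      SimpleGraph.not_isDiag_of_mem_edgeSet G (hsub he)
    obtain ⟨v, hv1⟩ := exists_leaf H hne hd hac
    obtain ⟨e, he⟩ := Finset.card_eq_one.mp hv1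
    have hef : e ∈ H.filter (fun e => v ∈ e) := by
      rw [he]; exact Finset.mem_singleton_self e
    have heH : e ∈ H := (Finset.mem_filter.mp hef).1
    have hve : v ∈ e := (Finset.mem_filter.mp hef).2
    set w := Sym2.Mem.other hve with hw
    have hew : e = s(v, w) := (Sym2.other_spec hve).symm
    have hwv : w ≠ v := Sym2.other_ne (hd e heH) hve
    have hwe : w ∈ e := Sym2.other_mem hve
    set H' := H.erase e with hH'
    have hcard' : H'.card < n := by
      rw [hH', ← hcard]
      exact Finset.card_erase_lt_of_mem heH
    have hsub' : (↑H' : Set (Sym2 V)) ⊆ G.edgeSet :=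
      Set.Subset.trans (by exact_mod_cast Finset.coe_subset.mpr (Finset.erase_subset e H)) hsub
    have hac' : (SimpleGraph.fromEdgeSet (↑H' : Set (Sym2 V))).IsAcyclic :=
      acyclic_mono' (SimpleGraph.fromEdgeSet_mono
        (by exact_mod_cast Finset.coe_subset.mpr (Finset.erase_subset e H))) hac
    have hdeg' : ∀ u : V, (H'.filter fun e => u ∈ e).card ≤ 2 := fun u =>
      le_trans (Finset.card_le_card (Finset.filter_subset_filter _ (Finset.erase_subset e H)))
        (hdeg u)
    obtain ⟨M1, M2, hM1, hM2, hdisj, huni⟩ := ih H'.card hcard' H' rfl hsub' hac' hdeg'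
    -- degree facts in H'
    have hfv : H'.filter (fun e => v ∈ e) = ∅ := by
      rw [hH', Finset.filter_erase, he, Finset.erase_singleton]
    have hfw : (H'.filter fun e' => w ∈ e').card ≤ 1 := by
      have hewf : e ∈ H.filter fun e' => w ∈ e' := Finset.mem_filter.mpr ⟨heH, hwe⟩
      rw [hH', Finset.filter_erase, Finset.card_erase_of_mem hewf]
      have := hdeg w
      omega
    have hsumw : (M1.filter fun e' => w ∈ e').card + (M2.filter fun e' => w ∈ e').card ≤ 1 := by
      have : (M1.filter fun e' => w ∈ e') ∪ (M2.filter fun e' => w ∈ e')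
          = H'.filter fun e' => w ∈ e' := by rw [← Finset.filter_union, huni]
      rw [← this] at hfw
      calc (M1.filter fun e' => w ∈ e').card + (M2.filter fun e' => w ∈ e').card
          = ((M1.filter fun e' => w ∈ e') ∪ (M2.filter fun e' => w ∈ e')).card :=
            (Finset.card_union_of_disjoint
              (Finset.disjoint_filter_filter hdisj)).symm
        _ ≤ 1 := hfw
    -- the key step: insert e into whichever matching misses w
    have key : ∀ A B : Finset (Sym2 V), IsMatching' G A → IsMatching' G B →
        Disjoint A B → A ∪ B = H' → (B.filter fun e' => w ∈ e').card = 0 →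
        ∃ M1 M2 : Finset (Sym2 V), IsMatching' G M1 ∧ IsMatching' G M2 ∧
          Disjoint M1 M2 ∧ M1 ∪ M2 = H := by
      intro A B hA hB hAB hABu hBw
      refine ⟨A, insert e B, hA, ⟨?_, ?_⟩, ?_, ?_⟩
      · intro e' he'
        rcases Finset.mem_coe.mp he' |> Finset.mem_insert.mp with rfl | h
        · exact hsub heH
        · exact hB.1 h
      · intro u
        rw [Finset.filter_insert]
        by_cases hue : u ∈ e
        · rw [if_pos hue]
          have hB0 : (B.filter fun e' => u ∈ e').card = 0 := by
            rcases Sym2.mem_iff'.mp (hew ▸ hue) with rfl | rfl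
            · have : B.filter (fun e' => u ∈ e') ⊆ H'.filter fun e' => u ∈ e' :=
                Finset.filter_subset_filter _ (by rw [← hABu]; exact Finset.subset_union_right)
              rw [hfv] at this
              simpa using Finset.card_le_card this
            · exact hBw
          rw [Finset.card_insert_of_notMem]
          · omega
          · intro hmem
            have : e ∈ B := Finset.mem_of_mem_filter e hmem
            have : e ∈ H' := by rw [← hABu]; exact Finset.mem_union_right _ this
            exact Finset.notMem_erase e H (hH' ▸ this)
        · rw [if_neg hue]; exact hB.2 u
      · rw [Finset.disjoint_insert_right]
        constructor
        · intro heA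
          have : e ∈ H' := by rw [← hABu]; exact Finset.mem_union_left _ heA
          exact Finset.notMem_erase e H (hH' ▸ this)
        · exact hAB
      · rw [Finset.union_insert, ← Finset.insert_union, Finset.insert_union_comm] at *
        · rw [show A ∪ insert e B = insert e (A ∪ B) by
            rw [Finset.union_insert], hABu, hH', Finset.insert_erase heH]
    by_cases hBw : (M2.filter fun e' => w ∈ e').card = 0
    · exact key M1 M2 hM1 hM2 hdisj huni hBw
    · have hAw : (M1.filter fun e' => w ∈ e').card = 0 := by omega
      obtain ⟨N1, N2, h1, h2, h3, h4⟩ :=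
        key M2 M1 hM2 hM1 hdisj.symm (by rw [Finset.union_comm]; exact huni) hAw
      exact ⟨N1, N2, h1, h2, h3, h4⟩

open RCurv in
lemma sum_indVec (T : Finset (Sym2 V)) (v : V) :
    ∑ e ∈ Finset.univ.filter (fun e : Sym2 V => v ∈ e), indVec T e
      = ((T.filter fun e => v ∈ e).card : ℝ) := by
  classical
  simp only [indVec]
  rw [Finset.sum_boole]
  congr 2
  ext e
  simp [and_comm]

open RCurv in
lemma int_point_of_convexHull {P : Finset (Sym2 V) → Prop} {x : Sym2 V → ℝ}
    (hx : ∀ e : Sym2 V, ∃ z : ℤ, x e = (z : ℝ))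
    (h : x ∈ convexHull ℝ {y : Sym2 V → ℝ | ∃ T, P T ∧ y = indVec T}) :
    ∃ T, P T ∧ x = indVec T := by
  classical
  rw [convexHull_eq] at h
  obtain ⟨ι, t, wgt, z, hw0, hw1, hz, hcm⟩ := h
  rw [Finset.centerMass_eq_of_sum_1 _ _ hw1] at hcm
  choose T hT hzT using hz
  have hne : ∃ i ∈ t, wgt i ≠ 0 :=
    Finset.exists_ne_zero_of_sum_ne_zero (by rw [hw1]; exact one_ne_zero)
  obtain ⟨i0, hi0t, hi0⟩ := hne
  have hi0pos : 0 < wgt i0 := lt_of_le_of_ne (hw0 i0 hi0t) (Ne.symm hi0)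
  refine ⟨T i0 hi0t, hT i0 hi0t, ?_⟩
  funext e
  have hxe : x e = ∑ i ∈ t, wgt i * z i e := by
    rw [← hcm]
    simp [Finset.sum_apply]
  have hz01 : ∀ i (hi : i ∈ t), z i e = 0 ∨ z i e = 1 := by
    intro i hi
    rw [hzT i hi]
    by_cases hh : e ∈ T i hi <;> simp [indVec, hh]
  have hz0le : ∀ i ∈ t, 0 ≤ z i e := by
    intro i hi; rcases hz01 i hi with h' | h' <;> rw [h'] <;> norm_num
  have hzle1 : ∀ i ∈ t, z i e ≤ 1 := by
    intro i hi; rcases hz01 i hi with h' | h' <;> rw [h'] <;> norm_num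
  have hxe0 : 0 ≤ x e := by
    rw [hxe]
    exact Finset.sum_nonneg fun i hi => mul_nonneg (hw0 i hi) (hz0le i hi)
  have hxe1 : x e ≤ 1 := by
    rw [hxe, ← hw1]
    exact Finset.sum_le_sum fun i hi => by
      calc wgt i * z i e ≤ wgt i * 1 := mul_le_mul_of_nonneg_left (hzle1 i hi) (hw0 i hi)
        _ = wgt i := mul_one _
  have hxe01 : x e = 0 ∨ x e = 1 := by
    obtain ⟨z0, hz0⟩ := hx e
    rw [hz0] at hxe0 hxe1 ⊢
    have h0 : (0 : ℤ) ≤ z0 := by exact_mod_cast hxe0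
    have h1 : z0 ≤ 1 := by exact_mod_cast hxe1
    interval_cases z0 <;> simp
  rcases hxe01 with hc | hc
  · -- all terms zero
    have hall : ∀ i ∈ t, wgt i * z i e = 0 := by
      rw [hc] at hxe
      exact (Finset.sum_eq_zero_iff_of_nonneg
        (fun i hi => mul_nonneg (hw0 i hi) (hz0le i hi))).mp hxe.symm
    have := hall i0 hi0t
    have hz0 : z i0 e = 0 := by
      rcases mul_eq_zero.mp this with h' | h'
      · exact absurd h' hi0
      · exact h'
    rw [hc, ← hzT i0 hi0t, hz0]
  · have hsum0 : ∑ i ∈ t, wgt i * (1 - z i e) = 0 := by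
      have : ∑ i ∈ t, wgt i * (1 - z i e) = (∑ i ∈ t, wgt i) - ∑ i ∈ t, wgt i * z i e := by
        rw [← Finset.sum_sub_distrib]
        congr 1
        funext i
        ring
      rw [this, hw1, ← hxe, hc, sub_self]
    have hall : ∀ i ∈ t, wgt i * (1 - z i e) = 0 :=
      (Finset.sum_eq_zero_iff_of_nonneg
        (fun i hi => mul_nonneg (hw0 i hi) (by linarith [hzle1 i hi]))).mp hsum0
    have := hall i0 hi0t
    have hz1 : z i0 e = 1 := by
      rcases mul_eq_zero.mp this with h' | h'
      · exact absurd h' hi0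
      · linarith
    rw [hc, ← hzT i0 hi0t, hz1]

end Aux

open scoped Pointwise in
open RCurv in
/-- The integer points of `Θ(G) = P(G) ∩ 2M(G)` are exactly the indicator vectors of
Hamiltonian paths of `G`. -/
theorem integer_points_of_TDM_polytope {V : Type*} [Fintype V] [DecidableEq V]
    (G : SimpleGraph V) (hG : G.Connected)
    (x : Sym2 V → ℝ) (hx : ∀ e : Sym2 V, ∃ z : ℤ, x e = (z : ℝ)) :
    x ∈ stPolytope G ∩ (2 : ℝ) • matchingPolytope G ↔
      ∃ H : Finset (Sym2 V), IsHamPath G H ∧ x = indVec H := by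
  classical
  constructor
  · rintro ⟨hst, hmp⟩
    -- x is the indicator vector of a spanning tree
    obtain ⟨T, hTst, hxT⟩ :=
      int_point_of_convexHull (P := fun T => T ∈ spanningTrees G) hx hst
    have hTtree : IsSpanningTree G T := (Finset.mem_filter.mp hTst).2
    -- degree bound from the matching polytope
    obtain ⟨y, hy, hxy⟩ := Set.mem_smul_set.mp hmp
    have hdeg : ∀ v : V, (T.filter fun e => v ∈ e).card ≤ 2 := by
      intro v
      set L : (Sym2 V → ℝ) → ℝ :=
        fun y => ∑ e ∈ Finset.univ.filter (fun e : Sym2 V => v ∈ e), y e with hL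
      have hlin : IsLinearMap ℝ L := by
        constructor
        · intro a b; simp [hL, Finset.sum_add_distrib]
        · intro c a; simp [hL, Finset.mul_sum]
      have hy1 : L y ≤ 1 := by
        have hsub : {x : Sym2 V → ℝ | ∃ M : Finset (Sym2 V), IsMatching' G M ∧ x = indVec M}
            ⊆ {y : Sym2 V → ℝ | L y ≤ 1} := by
          rintro _ ⟨M, hM, rfl⟩
          show L (indVec M) ≤ 1
          rw [hL]
          simp only
          rw [sum_indVec M v]
          exact_mod_cast hM.2 v
        exact convexHull_min hsub (convex_halfSpace_le hlin 1) hy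
      have hLx : L x = 2 * L y := by
        rw [← hxy, hL]
        simp [Finset.mul_sum]
      have hLx2 : L x ≤ 2 := by rw [hLx]; linarith
      have hLxcard : L x = ((T.filter fun e => v ∈ e).card : ℝ) := by
        rw [hxT, hL]; exact sum_indVec T v
      rw [hLxcard] at hLx2
      exact_mod_cast hLx2
    exact ⟨T, ⟨hTtree, hdeg⟩, hxT⟩
  · rintro ⟨H, ⟨hHst, hHdeg⟩, rfl⟩
    have hHmem : H ∈ spanningTrees G := Finset.mem_filter.mpr ⟨Finset.mem_univ _, hHst⟩
    constructor
    · exact subset_convexHull ℝ _ ⟨H, hHmem, rfl⟩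
    · -- split H into two matchings
      obtain ⟨M1, M2, hM1, hM2, hdisj, huni⟩ :=
        split_matchings G H.card H rfl hHst.1 hHst.2.IsAcyclic hHdeg
      have hsum : indVec M1 + indVec M2 = indVec H := by
        funext e
        simp only [Pi.add_apply, indVec]
        by_cases h1 : e ∈ M1
        · have h2 : e ∉ M2 := fun h2 => (Finset.disjoint_left.mp hdisj h1) h2
          have hH : e ∈ H := by rw [← huni]; exact Finset.mem_union_left _ h1
          simp [h1, h2, hH]
        · by_cases h2 : e ∈ M2
          · have hH : e ∈ H := by rw [← huni]; exact Finset.mem_union_right _ h2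
            simp [h1, h2, hH]
          · have hH : e ∉ H := by
              rw [← huni]
              simp [h1, h2]
            simp [h1, h2, hH]
      rw [Set.mem_smul_set]
      refine ⟨(1/2 : ℝ) • indVec M1 + (1/2 : ℝ) • indVec M2, ?_, ?_⟩
      · have hm1 : indVec M1 ∈ matchingPolytope G :=
          subset_convexHull ℝ _ (⟨M1, hM1, rfl⟩ :
            indVec M1 ∈ {x : Sym2 V → ℝ | ∃ M : Finset (Sym2 V), IsMatching' G M ∧ x = indVec M})
        have hm2 : indVec M2 ∈ matchingPolytope G :=
          subset_convexHull ℝ _ (⟨M2, hM2, rfl⟩ :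
            indVec M2 ∈ {x : Sym2 V → ℝ | ∃ M : Finset (Sym2 V), IsMatching' G M ∧ x = indVec M})
        have hconv : Convex ℝ (matchingPolytope G) := convex_convexHull ℝ _
        exact hconv hm1 hm2 (by norm_num) (by norm_num) (by norm_num)
      · rw [smul_add, smul_smul, smul_smul, ← hsum]
        norm_num
end

section
/- Connected resistance positive graphs are 1-tough: if a finite simple connected loopless graph G = (V, E) is resistance positive (RP), then for every nonempty subset U ⊂ V whose removal disconnects G, the graph G − U has at most |U| connected components. -/
open scoped Classical

set_option linter.unusedSectionVars false
set_option linter.unusedVariables false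

namespace RCurvAux

open SimpleGraph Finset

variable {V : Type*} [Fintype V] [DecidableEq V] {H : SimpleGraph V}


open SimpleGraph Finset


lemma exists_spanningTree_aux : ∀ (n : ℕ) (G : SimpleGraph V), G.edgeSet.ncard = n →
    G.Connected → ∃ T : Finset (Sym2 V), RCurv.IsSpanningTree G T := by
  intro n
  induction n using Nat.strong_induction_on with
  | _ n ih =>
    intro G hn hG
    by_cases ha : G.IsAcyclic
    · refine ⟨G.edgeSet.toFinset, ?_, ?_⟩
      · rw [Set.coe_toFinset]
      · rw [Set.coe_toFinset, fromEdgeSet_edgeSet]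
        exact ⟨hG, ha⟩
    · rw [isAcyclic_iff_forall_adj_isBridge] at ha
      push_neg at ha
      obtain ⟨v, w, hadj, hnb⟩ := ha
      set G' := G \ fromEdgeSet {s(v, w)} with hG'def
      have hle : G' ≤ G := sdiff_le
      have hrvw : G'.Reachable v w := by
        rw [isBridge_iff] at hnb
        push_neg at hnb
        exact hnb
      have hES : G'.edgeSet = G.edgeSet \ {s(v, w)} := by
        rw [hG'def, edgeSet_sdiff, edgeSet_fromEdgeSet, edgeSet_sdiff_sdiff_isDiag]
      have hlt : G'.edgeSet.ncard < n := by
        rw [hES, ← hn]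
        exact Set.ncard_diff_singleton_lt_of_mem (G.mem_edgeSet.mpr hadj) (Set.toFinite _)
      haveI : Nonempty V := hG.nonempty
      have hconn' : G'.Connected := by
        refine Connected.mk fun x y => ?_
        obtain ⟨p⟩ := hG.preconnected x y
        induction p with
        | nil => exact Reachable.refl _
        | @cons a b d h' q ihq =>
          refine Reachable.trans ?_ ihq
          by_cases he : s(a, b) = s(v, w)
          · rw [Sym2.eq_iff] at he
            rcases he with ⟨rfl, rfl⟩ | ⟨rfl, rfl⟩
            · exact hrvw
            · exact hrvw.symm
          · have : G'.Adj a b := by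
              rw [hG'def, sdiff_adj, fromEdgeSet_adj]
              exact ⟨h', by tauto⟩
            exact this.reachable
      obtain ⟨T, hT1, hT2⟩ := ih _ hlt G' rfl hconn'
      exact ⟨T, hT1.trans (edgeSet_mono hle), hT2⟩



noncomputable def tp (hH : H.IsTree) (r x : V) : H.Walk x r :=
  (hH.existsUnique_path x r).exists.choose

lemma tp_isPath (hH : H.IsTree) (r x : V) : (tp hH r x).IsPath :=
  (hH.existsUnique_path x r).exists.choose_spec

lemma tp_uniq (hH : H.IsTree) {r x : V} (p : H.Walk x r) (hp : p.IsPath) : p = tp hH r x := by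
  obtain ⟨q, hq1, hq2⟩ := hH.existsUnique_path x r
  rw [hq2 p hp, hq2 _ (tp_isPath hH r x)]

lemma tp_not_nil (hH : H.IsTree) {r x : V} (hx : x ≠ r) : ¬(tp hH r x).Nil := fun h =>
  hx (SimpleGraph.Walk.eq_of_length_eq_zero (SimpleGraph.Walk.nil_iff_length_eq.mp h))

noncomputable def par (hH : H.IsTree) (r x : V) : V := (tp hH r x).getVert 1

lemma adj_par (hH : H.IsTree) {r x : V} (hx : x ≠ r) : H.Adj x (par hH r x) :=
  SimpleGraph.Walk.adj_snd (tp_not_nil hH hx)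

lemma tp_par (hH : H.IsTree) {r x : V} (hx : x ≠ r) :
    tp hH r (par hH r x) = (tp hH r x).tail :=
  (tp_uniq hH _ ((tp_isPath hH r x).tail)).symm

lemma length_par (hH : H.IsTree) {r x : V} (hx : x ≠ r) :
    (tp hH r (par hH r x)).length + 1 = (tp hH r x).length := by
  rw [tp_par hH hx]
  exact SimpleGraph.Walk.length_tail_add_one (tp_not_nil hH hx)

lemma not_mem_support_par (hH : H.IsTree) {r x : V} (hx : x ≠ r) :
    x ∉ (tp hH r (par hH r x)).support := by
  have h1 := tp_isPath hH r x
  rw [← SimpleGraph.Walk.cons_tail_eq _ (tp_not_nil hH hx),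
    SimpleGraph.Walk.cons_isPath_iff] at h1
  rw [tp_par hH hx]
  exact h1.2

lemma ce_inj (hH : H.IsTree) {r x y : V} (hx : x ≠ r) (hy : y ≠ r)
    (h : s(x, par hH r x) = s(y, par hH r y)) : x = y := by
  rw [Sym2.eq_iff] at h
  rcases h with ⟨h1, h2⟩ | ⟨h1, h2⟩
  · exact h1
  · exfalso
    subst h2
    apply not_mem_support_par hH hx
    rw [SimpleGraph.Walk.mem_support_iff_exists_getVert]
    refine ⟨1, h1.symm, ?_⟩
    have := SimpleGraph.Walk.not_nil_iff_lt_length.mp (tp_not_nil hH hy)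
    omega

/-- Key counting lemma: for any spanning tree `T` and nonempty `U`,
`|U| + #components(G - U) ≤ 1 + ∑_{v ∈ U} deg_T v`. -/
lemma key_count (G : SimpleGraph V) {T : Finset (Sym2 V)} (hT : RCurv.IsSpanningTree G T)
    (U : Finset V) (hUne : U.Nonempty) :
    U.card + Nat.card (G.induce ((U : Set V)ᶜ)).ConnectedComponent
      ≤ 1 + ∑ v ∈ U, (T.filter fun e => v ∈ e).card := by
  set H := SimpleGraph.fromEdgeSet (T : Set (Sym2 V)) with hHdef
  have hH : H.IsTree := hT.2
  obtain ⟨r, hr⟩ := hUne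
  set K := G.induce ((U : Set V)ᶜ) with hKdef
  haveI : Fintype K.ConnectedComponent := Fintype.ofFinite _
  -- adjacency in H gives edges of T and adjacency in G
  have hHadjT : ∀ {a b : V}, H.Adj a b → s(a, b) ∈ T := by
    intro a b hab
    rw [hHdef, fromEdgeSet_adj] at hab
    exact hab.1
  have hHadjG : ∀ {a b : V}, H.Adj a b → G.Adj a b := by
    intro a b hab
    exact G.mem_edgeSet.mp (hT.1 (hHadjT hab))
  -- choose a representative of minimal depth in each component
  have hrex : ∀ c : K.ConnectedComponent, ∃ x : ((U : Set V)ᶜ : Set V),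
      K.connectedComponentMk x = c ∧
      ∀ y : ((U : Set V)ᶜ : Set V), K.connectedComponentMk y = c →
        (tp hH r (x : V)).length ≤ (tp hH r (y : V)).length := by
    intro c
    obtain ⟨x₀, hx₀⟩ := c.exists_rep
    obtain ⟨x, hx1, hx2⟩ := Finset.exists_min_image
      (Finset.univ.filter fun y : ((U : Set V)ᶜ : Set V) => K.connectedComponentMk y = c)
      (fun y => (tp hH r (y : V)).length) ⟨x₀, Finset.mem_filter.mpr ⟨Finset.mem_univ _, hx₀⟩⟩
    rw [Finset.mem_filter] at hx1
    exact ⟨x, hx1.2, fun y hy => hx2 y (by simp [hy])⟩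
  choose rep hrep1 hrep2 using hrex
  -- basic facts about representatives
  have hrepU : ∀ c, (rep c : V) ∉ U := fun c => (rep c).2
  have hrepr : ∀ c, (rep c : V) ≠ r := fun c h => hrepU c (h ▸ hr)
  -- the parent of a representative lies in U
  have hrepPar : ∀ c, par hH r (rep c : V) ∈ U := by
    intro c
    by_contra hpar
    have hmem : (par hH r (rep c : V)) ∈ ((U : Set V)ᶜ : Set V) := hpar
    have hadjK : K.Adj (rep c) ⟨_, hmem⟩ := hHadjG (adj_par hH (hrepr c))
    have hmk : K.connectedComponentMk ⟨_, hmem⟩ = c :=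
      (SimpleGraph.ConnectedComponent.connectedComponentMk_eq_of_adj hadjK).symm.trans (hrep1 c)
    have hle : (tp hH r ((rep c) : V)).length ≤ (tp hH r (par hH r ((rep c) : V))).length :=
      hrep2 c ⟨_, hmem⟩ hmk
    have hlen := length_par hH (hrepr c)
    omega
  -- the set of "children"
  set A : Finset V := U.erase r ∪ Finset.univ.image (fun c : K.ConnectedComponent => (rep c : V))
    with hAdef
  have hAr : ∀ x ∈ A, x ≠ r := by
    intro x hx
    rw [hAdef, Finset.mem_union] at hx
    rcases hx with hx | hx
    · exact Finset.ne_of_mem_erase hx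
    · obtain ⟨c, -, rfl⟩ := Finset.mem_image.mp hx
      exact hrepr c
  have hAU : ∀ x ∈ A, x ∈ U ∨ par hH r x ∈ U := by
    intro x hx
    rw [hAdef, Finset.mem_union] at hx
    rcases hx with hx | hx
    · exact Or.inl (Finset.mem_of_mem_erase hx)
    · obtain ⟨c, -, rfl⟩ := Finset.mem_image.mp hx
      exact Or.inr (hrepPar c)
  -- counting
  have hAcard : U.card + Fintype.card K.ConnectedComponent = 1 + A.card := by
    rw [hAdef, Finset.card_union_of_disjoint, Finset.card_image_of_injective,
      Finset.card_univ]
    · have := Finset.card_erase_add_one hr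
      omega
    · intro c c' h
      have h2 : rep c = rep c' := Subtype.coe_injective h
      rw [← hrep1 c, ← hrep1 c', h2]
    · rw [Finset.disjoint_right]
      intro x hx
      obtain ⟨c, -, rfl⟩ := Finset.mem_image.mp hx
      exact fun hmem => hrepU c (Finset.mem_of_mem_erase hmem)
  have himg : (A.image fun x => s(x, par hH r x)).card = A.card :=
    Finset.card_image_of_injOn fun x hx y hy h => ce_inj hH (hAr x hx) (hAr y hy) h
  have hsub : A.image (fun x => s(x, par hH r x)) ⊆ T.filter fun e => ∃ u ∈ U, u ∈ e := by
    intro e he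
    obtain ⟨x, hx, rfl⟩ := Finset.mem_image.mp he
    rw [Finset.mem_filter]
    refine ⟨hHadjT (adj_par hH (hAr x hx)), ?_⟩
    rcases hAU x hx with h | h
    · exact ⟨x, h, by simp⟩
    · exact ⟨par hH r x, h, by simp⟩
  have hTU : (T.filter fun e => ∃ u ∈ U, u ∈ e).card ≤ ∑ v ∈ U, (T.filter fun e => v ∈ e).card := by
    calc (T.filter fun e => ∃ u ∈ U, u ∈ e).card
        = ∑ e ∈ T.filter (fun e => ∃ u ∈ U, u ∈ e), 1 := by rw [Finset.card_eq_sum_ones]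
      _ ≤ ∑ e ∈ T.filter (fun e => ∃ u ∈ U, u ∈ e), (U.filter fun v => v ∈ e).card := by
          refine Finset.sum_le_sum fun e he => ?_
          obtain ⟨u, hu, hue⟩ := (Finset.mem_filter.mp he).2
          exact Finset.card_pos.mpr ⟨u, Finset.mem_filter.mpr ⟨hu, hue⟩⟩
      _ ≤ ∑ e ∈ T, (U.filter fun v => v ∈ e).card :=
          Finset.sum_le_sum_of_subset (Finset.filter_subset _ _)
      _ = ∑ e ∈ T, ∑ v ∈ U, if v ∈ e then 1 else 0 := by
          refine Finset.sum_congr rfl fun e _ => ?_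
          rw [Finset.card_filter]
      _ = ∑ v ∈ U, ∑ e ∈ T, if v ∈ e then 1 else 0 := Finset.sum_comm
      _ = ∑ v ∈ U, (T.filter fun e => v ∈ e).card := by
          refine Finset.sum_congr rfl fun v _ => ?_
          rw [Finset.card_filter]
  have hk : Nat.card K.ConnectedComponent = Fintype.card K.ConnectedComponent :=
    Nat.card_eq_fintype_card
  have hcard2 := Finset.card_le_card hsub
  omega


end RCurvAux

open RCurv in
/-- Connected resistance positive graphs are `1`-tough: if removing a nonempty vertex set `U`
disconnects `G`, then `G - U` has at most `|U|` connected components. -/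
theorem isRP_one_tough {V : Type*} [Fintype V] [DecidableEq V]
    (G : SimpleGraph V) (hG : G.Connected) (hRP : IsRP G)
    (U : Finset V) (hUne : U.Nonempty)
    (hdis : ¬ (G.induce ((U : Set V)ᶜ)).Connected) :
    Nat.card (G.induce ((U : Set V)ᶜ)).ConnectedComponent ≤ U.card := by
  classical
  obtain ⟨c, hc, hp⟩ := hRP
  obtain ⟨T₀, hT₀⟩ := RCurvAux.exists_spanningTree_aux G.edgeSet.ncard G rfl hG
  set S := RCurv.spanningTrees G with hSdef
  have hSmem : ∀ T ∈ S, RCurv.IsSpanningTree G T := fun T hT => (Finset.mem_filter.mp hT).2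
  have hSne : S.Nonempty := ⟨T₀, Finset.mem_filter.mpr ⟨Finset.mem_univ _, hT₀⟩⟩
  have hprodpos : ∀ T ∈ S, (0 : ℝ) < ∏ t ∈ T, c t := fun T hT =>
    Finset.prod_pos fun e he => hc e ((hSmem T hT).1 he)
  set D := ∑ T ∈ S, ∏ t ∈ T, c t with hDdef
  have hD : 0 < D := Finset.sum_pos hprodpos hSne
  set k := Nat.card (G.induce ((U : Set V)ᶜ)).ConnectedComponent with hkdef
  have hv : ∀ v : V,
      ∑ T ∈ S, ((T.filter fun e => v ∈ e).card : ℝ) * ∏ t ∈ T, c t < 2 * D := by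
    intro v
    have h1 : 0 < RCurv.curv G c v := hp v
    unfold RCurv.curv at h1
    have h2 : ∑ u ∈ G.neighborFinset v, RCurv.relRes G c s(u, v) < 2 := by linarith
    have h3 : ∑ u ∈ G.neighborFinset v, RCurv.relRes G c s(u, v)
        = (∑ T ∈ S, ((T.filter fun e => v ∈ e).card : ℝ) * ∏ t ∈ T, c t) / D := by
      unfold RCurv.relRes
      rw [← Finset.sum_div]
      congr 1
      rw [Finset.sum_congr rfl fun u (_ : u ∈ G.neighborFinset v) =>
        Finset.sum_filter (fun T => s(u, v) ∈ T) (fun T => ∏ t ∈ T, c t), Finset.sum_comm]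
      refine Finset.sum_congr rfl fun T hT => ?_
      have hbij : ((G.neighborFinset v).filter fun u => s(u, v) ∈ T).card
          = (T.filter fun e => v ∈ e).card := by
        apply Finset.card_bij (fun u _ => s(u, v))
        · intro u hu
          rw [Finset.mem_filter] at hu ⊢
          exact ⟨hu.2, by simp⟩
        · intro a ha b hb hab
          have ha' := (Finset.mem_filter.mp ha).1
          have hb' := (Finset.mem_filter.mp hb).1
          rw [SimpleGraph.mem_neighborFinset] at ha' hb'
          rw [Sym2.eq_iff] at hab
          rcases hab with ⟨h1, -⟩ | ⟨h1, h2⟩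
          · exact h1
          · exact absurd h1.symm ha'.ne
        · intro e he
          rw [Finset.mem_filter] at he
          obtain ⟨het, hev⟩ := he
          obtain ⟨u, rfl⟩ := Sym2.mem_iff_exists.mp hev
          have hadj : G.Adj v u := G.mem_edgeSet.mp ((hSmem T hT).1 het)
          refine ⟨u, ?_, Sym2.eq_swap⟩
          rw [Finset.mem_filter, SimpleGraph.mem_neighborFinset]
          exact ⟨hadj, by rw [Sym2.eq_swap]; exact het⟩
      calc ∑ u ∈ G.neighborFinset v, (if s(u, v) ∈ T then ∏ t ∈ T, c t else 0)
          = ∑ u ∈ (G.neighborFinset v).filter (fun u => s(u, v) ∈ T), ∏ t ∈ T, c t :=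
            (Finset.sum_filter _ _).symm
        _ = ((G.neighborFinset v).filter (fun u => s(u, v) ∈ T)).card • (∏ t ∈ T, c t) :=
            Finset.sum_const _
        _ = ((T.filter fun e => v ∈ e).card : ℝ) * ∏ t ∈ T, c t := by
            rw [hbij, nsmul_eq_mul]
    rw [h3, div_lt_iff₀ hD] at h2
    linarith
  have hU2 : ∑ T ∈ S, (∑ v ∈ U, ((T.filter fun e => v ∈ e).card : ℝ)) * ∏ t ∈ T, c t
      < (2 * U.card) * D := by
    have h := Finset.sum_lt_sum_of_nonempty hUne
      (fun v (_ : v ∈ U) => hv v)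
    rw [Finset.sum_const, nsmul_eq_mul, Finset.sum_comm] at h
    calc ∑ T ∈ S, (∑ v ∈ U, ((T.filter fun e => v ∈ e).card : ℝ)) * ∏ t ∈ T, c t
        = ∑ T ∈ S, ∑ v ∈ U, ((T.filter fun e => v ∈ e).card : ℝ) * ∏ t ∈ T, c t := by
          refine Finset.sum_congr rfl fun T _ => ?_
          rw [Finset.sum_mul]
      _ < (U.card : ℝ) * (2 * D) := h
      _ = (2 * U.card) * D := by ring
  have hlow : ((U.card : ℝ) + (k : ℝ) - 1) * D
      ≤ ∑ T ∈ S, (∑ v ∈ U, ((T.filter fun e => v ∈ e).card : ℝ)) * ∏ t ∈ T, c t := by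
    rw [hDdef, Finset.mul_sum]
    refine Finset.sum_le_sum fun T hT => ?_
    have hkey := RCurvAux.key_count G (hSmem T hT) U hUne
    rw [← hkdef] at hkey
    have hkey' : (U.card : ℝ) + (k : ℝ) - 1 ≤ ∑ v ∈ U, ((T.filter fun e => v ∈ e).card : ℝ) := by
      have : ((U.card + k : ℕ) : ℝ) ≤ ((1 + ∑ v ∈ U, (T.filter fun e => v ∈ e).card : ℕ) : ℝ) :=
        Nat.cast_le.mpr hkey
      push_cast at this
      linarith
    exact mul_le_mul_of_nonneg_right hkey' (hprodpos T hT).le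
  have hfinal : ((U.card : ℝ) + (k : ℝ) - 1) * D < (2 * U.card) * D := hlow.trans_lt hU2
  have hfinal2 : (U.card : ℝ) + (k : ℝ) - 1 < 2 * U.card :=
    lt_of_mul_lt_mul_right hfinal hD.le
  have hnat : U.card + k < 2 * U.card + 1 := by
    have : ((U.card + k : ℕ) : ℝ) < ((2 * U.card + 1 : ℕ) : ℝ) := by push_cast; linarith
    exact_mod_cast this
  omega
end

section
/- Let G = (V, E) be a finite simple loopless graph and let H be a connected spanning subgraph of G (same vertex set V, edge set E(H) ⊆ E). If H is resistance positive (RP), then G is resistance positive (RP). -/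
open scoped Classical

namespace RCurvAux

open SimpleGraph

/-- Deleting a non-bridge edge preserves reachability. -/
lemma reachable_del {V : Type*} {G : SimpleGraph V} {v w a b : V}
    (h : (G \ SimpleGraph.fromEdgeSet {s(v, w)}).Reachable v w) (p : G.Walk a b) :
    (G \ SimpleGraph.fromEdgeSet {s(v, w)}).Reachable a b := by
  induction p with
  | nil => exact Reachable.refl _
  | @cons u x y h' q ih =>
    refine Reachable.trans ?_ ih
    by_cases he : s(u, x) = s(v, w)
    · rw [Sym2.eq_iff] at he
      rcases he with ⟨rfl, rfl⟩ | ⟨rfl, rfl⟩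
      · exact h
      · exact h.symm
    · exact Adj.reachable (by simp [sdiff_adj, fromEdgeSet_adj, h', he])

/-- Every connected graph contains a spanning tree. -/
lemma exists_tree_le' {V : Type*} [Fintype V] [DecidableEq V] :
    ∀ (n : ℕ) (H : SimpleGraph V), H.edgeSet.ncard ≤ n → H.Connected →
      ∃ T : SimpleGraph V, T ≤ H ∧ T.IsTree := by
  intro n
  induction n with
  | zero =>
    intro H hcard hconn
    have hbot : H = ⊥ := by
      rw [← edgeSet_eq_empty]
      exact (Set.ncard_eq_zero H.edgeSet.toFinite).mp (Nat.le_zero.mp hcard)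
    exact ⟨H, le_rfl, hconn, by rw [hbot]; exact isAcyclic_bot⟩
  | succ n ih =>
    intro H hcard hconn
    by_cases hac : H.IsAcyclic
    · exact ⟨H, le_rfl, hconn, hac⟩
    · rw [isAcyclic_iff_forall_edge_isBridge] at hac
      push_neg at hac
      obtain ⟨e, he, hnb⟩ := hac
      revert he hnb
      refine Sym2.ind (fun v w he hnb => ?_) e
      have hadj : H.Adj v w := he
      have hreach : (H \ SimpleGraph.fromEdgeSet {s(v, w)}).Reachable v w := by
        by_contra hr
        exact hnb hr
      have hne : Nonempty V := hconn.nonempty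
      have hconn' : (H \ SimpleGraph.fromEdgeSet {s(v, w)}).Connected :=
        ⟨fun a b => (hconn a b).elim fun p => reachable_del hreach p⟩
      have hsub : (H \ SimpleGraph.fromEdgeSet {s(v, w)}).edgeSet ⊆
          H.edgeSet \ {s(v, w)} := by
        intro x hx
        rw [edgeSet_sdiff, Set.mem_diff] at hx
        refine ⟨hx.1, fun hxe => hx.2 ?_⟩
        rw [Set.mem_singleton_iff] at hxe
        rw [edgeSet_fromEdgeSet]
        subst hxe
        exact ⟨rfl, by simp [Sym2.mk_isDiag_iff, hadj.ne]⟩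
      have hcard' : (H \ SimpleGraph.fromEdgeSet {s(v, w)}).edgeSet.ncard ≤ n := by
        have h1 := Set.ncard_le_ncard hsub ((H.edgeSet.toFinite).diff)
        have h2 := Set.ncard_diff_singleton_lt_of_mem he H.edgeSet.toFinite
        omega
      obtain ⟨T, hT, hTree⟩ := ih _ hcard' hconn'
      exact ⟨T, hT.trans sdiff_le, hTree⟩

open RCurv

/-- A connected graph has a spanning tree in the sense of `spanningTrees`. -/
lemma spanningTrees_nonempty_s13 {V : Type*} [Fintype V] [DecidableEq V]
    {H : SimpleGraph V} (hH : H.Connected) : (spanningTrees H).Nonempty := by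
  obtain ⟨T, hT, hTree⟩ := exists_tree_le' H.edgeSet.ncard H le_rfl hH
  refine ⟨T.edgeFinset, ?_⟩
  simp only [spanningTrees, Finset.mem_filter, Finset.mem_univ, true_and]
  simp only [IsSpanningTree]
  rw [SimpleGraph.coe_edgeFinset, SimpleGraph.fromEdgeSet_edgeSet]
  exact ⟨SimpleGraph.edgeSet_mono hT, hTree⟩

lemma spanningTrees_filter_eq {V : Type*} [Fintype V] {G H : SimpleGraph V} (hHG : H ≤ G)
    (p : Finset (Sym2 V) → Prop) [DecidablePred p] :
    (spanningTrees H).filter p =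
      ((spanningTrees G).filter p).filter
        (fun T : Finset (Sym2 V) => (↑T : Set (Sym2 V)) ⊆ H.edgeSet) := by
  ext T
  simp only [spanningTrees, Finset.mem_filter, Finset.mem_univ, true_and]
  simp only [IsSpanningTree]
  constructor
  · rintro ⟨⟨hsub, htree⟩, hp⟩
    exact ⟨⟨⟨hsub.trans (SimpleGraph.edgeSet_mono hHG), htree⟩, hp⟩, hsub⟩
  · rintro ⟨⟨⟨_, htree⟩, hp⟩, hsub⟩
    exact ⟨⟨hsub, htree⟩, hp⟩

/-- At `ε = 0`, tree sums over `G` with extended weights reduce to tree sums over `H`. -/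
lemma sum_prod_ext_zero {V : Type*} [Fintype V] {G H : SimpleGraph V} (hHG : H ≤ G)
    (c : Sym2 V → ℝ) (p : Finset (Sym2 V) → Prop) [DecidablePred p] :
    ∑ T ∈ (spanningTrees G).filter p, ∏ t ∈ T, (if t ∈ H.edgeSet then c t else 0) =
      ∑ T ∈ (spanningTrees H).filter p, ∏ t ∈ T, c t := by
  rw [spanningTrees_filter_eq hHG p]
  rw [← Finset.sum_filter_of_ne
    (p := fun T : Finset (Sym2 V) => (↑T : Set (Sym2 V)) ⊆ H.edgeSet)]
  · refine Finset.sum_congr rfl fun T hT => ?_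
    rw [Finset.mem_filter] at hT
    refine Finset.prod_congr rfl fun t ht => ?_
    exact if_pos (hT.2 ht)
  · intro T _ hne
    by_contra hsub
    rw [Set.not_subset] at hsub
    obtain ⟨t, htT, htH⟩ := hsub
    exact hne (Finset.prod_eq_zero htT (if_neg htH))

lemma sum_prod_ext_zero' {V : Type*} [Fintype V] {G H : SimpleGraph V} (hHG : H ≤ G)
    (c : Sym2 V → ℝ) :
    ∑ T ∈ spanningTrees G, ∏ t ∈ T, (if t ∈ H.edgeSet then c t else 0) =
      ∑ T ∈ spanningTrees H, ∏ t ∈ T, c t := by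
  have := sum_prod_ext_zero hHG c (fun _ => True)
  simpa [Finset.filter_true] using this

end RCurvAux


open RCurv in
/-- If `H` is a connected spanning subgraph of `G` and `H` is resistance positive, then so
is `G`. -/
theorem isRP_of_subgraph_isRP {V : Type*} [Fintype V] [DecidableEq V]
    (G H : SimpleGraph V) (hHG : H ≤ G) (hH : H.Connected) (hRP : IsRP H) :
    IsRP G := by
  obtain ⟨c, hcpos, hcurv⟩ := hRP
  set cext : ℝ → Sym2 V → ℝ := fun x e => if e ∈ H.edgeSet then c e else x with hcext
  -- the denominator function
  set D : ℝ → ℝ := fun x => ∑ T ∈ spanningTrees G, ∏ t ∈ T, cext x t with hD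
  have hD0 : D 0 = ∑ T ∈ spanningTrees H, ∏ t ∈ T, c t := RCurvAux.sum_prod_ext_zero' hHG c
  have hD0pos : 0 < D 0 := by
    rw [hD0]
    refine Finset.sum_pos (fun T hT => Finset.prod_pos fun t ht => ?_)
      (RCurvAux.spanningTrees_nonempty_s13 hH)
    simp only [spanningTrees, Finset.mem_filter, Finset.mem_univ, true_and] at hT
    exact hcpos t (hT.1 ht)
  -- numerator functions
  set N : Sym2 V → ℝ → ℝ := fun e x =>
    ∑ T ∈ (spanningTrees G).filter (fun T => e ∈ T), ∏ t ∈ T, cext x t with hN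
  have hcontD : Continuous D := by
    refine continuous_finset_sum _ fun T _ => continuous_finset_prod _ fun t _ => ?_
    by_cases ht : t ∈ H.edgeSet
    · simpa [hcext, ht] using (continuous_const : Continuous fun _ : ℝ => c t)
    · simpa [hcext, ht] using continuous_id'
  have hcontN : ∀ e, Continuous (N e) := by
    intro e
    refine continuous_finset_sum _ fun T _ => continuous_finset_prod _ fun t _ => ?_
    by_cases ht : t ∈ H.edgeSet
    · simpa [hcext, ht] using (continuous_const : Continuous fun _ : ℝ => c t)
    · simpa [hcext, ht] using continuous_id'
  -- curv at 0 equals curv of H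
  have hrel0 : ∀ e ∈ H.edgeSet, relRes G (cext 0) e = relRes H c e := by
    intro e he
    unfold relRes
    rw [show (∑ T ∈ (spanningTrees G).filter (fun T => e ∈ T), ∏ t ∈ T, cext 0 t)
        = ∑ T ∈ (spanningTrees H).filter (fun T => e ∈ T), ∏ t ∈ T, c t from
      RCurvAux.sum_prod_ext_zero hHG c (fun T => e ∈ T), ← hD0]
  have hrel0' : ∀ e ∈ G.edgeSet, e ∉ H.edgeSet → relRes G (cext 0) e = 0 := by
    intro e _ heH
    unfold relRes
    rw [Finset.sum_eq_zero, zero_div]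
    intro T hT
    rw [Finset.mem_filter] at hT
    exact Finset.prod_eq_zero hT.2 (by simp [hcext, heH])
  have hcurv0 : ∀ v, curv G (cext 0) v = curv H c v := by
    intro v
    unfold curv
    have hsub : H.neighborFinset v ⊆ G.neighborFinset v := by
      intro u hu
      rw [SimpleGraph.mem_neighborFinset] at hu ⊢
      exact hHG hu
    have hzero : ∀ u ∈ G.neighborFinset v, u ∉ H.neighborFinset v →
        relRes G (cext 0) s(u, v) = 0 := by
      intro u hu huH
      rw [SimpleGraph.mem_neighborFinset] at hu huH
      exact hrel0' s(u, v) ((G.mem_edgeSet).mpr hu.symm)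
        (fun h => huH ((H.mem_edgeSet).mp h).symm)
    rw [← Finset.sum_subset hsub hzero]
    have : ∀ u ∈ H.neighborFinset v, relRes G (cext 0) s(u, v) = relRes H c s(u, v) := by
      intro u hu
      rw [SimpleGraph.mem_neighborFinset] at hu
      exact hrel0 s(u, v) ((H.mem_edgeSet).mpr hu.symm)
    rw [Finset.sum_congr rfl this]
  -- continuity of curv in ε
  have hcont : ∀ v, ContinuousAt (fun x => curv G (cext x) v) 0 := by
    intro v
    have hrepr : (fun x => curv G (cext x) v) =
        fun x => 1 - 1 / 2 * ∑ u ∈ G.neighborFinset v, (N s(u, v) x / D x) := rfl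
    rw [hrepr]
    refine ContinuousAt.sub continuousAt_const (ContinuousAt.mul continuousAt_const ?_)
    exact tendsto_finset_sum _ fun u _ =>
      ((hcontN s(u, v)).continuousAt).div hcontD.continuousAt hD0pos.ne'
  have hev : ∀ᶠ x in nhds (0 : ℝ), ∀ v : V, 0 < curv G (cext x) v := by
    rw [Filter.eventually_all]
    intro v
    have h0 : 0 < curv G (cext 0) v := by rw [hcurv0 v]; exact hcurv v
    exact (hcont v).eventually (eventually_gt_nhds h0)
  have hev' : ∀ᶠ x in nhdsWithin (0 : ℝ) (Set.Ioi 0),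
      (∀ v : V, 0 < curv G (cext x) v) ∧ x ∈ Set.Ioi (0 : ℝ) :=
    (hev.filter_mono nhdsWithin_le_nhds).and self_mem_nhdsWithin
  obtain ⟨ε, hεcurv, hεpos⟩ := hev'.exists
  refine ⟨cext ε, fun e heG => ?_, hεcurv⟩
  by_cases he : e ∈ H.edgeSet
  · simpa [hcext, he] using hcpos e he
  · simpa [hcext, he] using hεpos
end
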